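/- arXiv:1412.6612 — 10 statements merged into one kernel-verified Lean document; each statement's English description precedes it below -/
import Mathlib

section
/- Let d ≥ 1 and let S ⊆ ℝ^d be a finite set shattered by the collection of closed axis-parallel cubes (Cartesian products of d closed intervals all of the same length, including degenerate singletons). Then |S| ≤ ⌊(3d+1)/2⌋. -/
/-- A collection `C` of subsets of `Ω` shatters a finite set `S` if every subset of `S`
is carved out by some member of `C`. -/
def Shatters {Ω : Type*} (C : Set (Set Ω)) (S : Finset Ω) : Prop :=
  ∀ A ⊆ S, ∃ c ∈ C, (S : Set Ω) ∩ c = (A : Set Ω)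

/-- The collection of closed axis-parallel cubes in `ℝ^d`: products of `d` closed intervals
all of the same (nonnegative) length. -/
def ClosedCubes (d : ℕ) : Set (Set (Fin d → ℝ)) :=
  {C | ∃ (a : Fin d → ℝ) (r : ℝ), 0 ≤ r ∧
    C = Set.univ.pi fun i => Set.Icc (a i) (a i + r)}

/-!
Let `p i₀ - q i₀` be the largest coordinate difference between two points of `S`. A cube
containing `p` and `q` has side at least `p i₀ - q i₀`, so a point of `S` it excludes leaves it
through a face normal to some `±eⱼ` with `j ≠ i₀`. Excluding a single `x ∈ S \ {p, q}` thus
makes `x` the unique strict extreme of `S` in one of the `2(d - 1)` directions `±eⱼ`, `j ≠ i₀`;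
assign one to each such `x`. If `x` and `y` are assigned `+eⱼ` and `-eⱼ`, a cube excluding
exactly `{x, y}` cannot let both leave through the `j`-faces (it would be narrower than
`x j - y j`), so `{x, y}` sticks out of the rest of `S` in a direction `±eₖ`, `k ≠ i₀, j`, that
no point is assigned to; distinct such pairs yield distinct directions. With `m` such pairs,
`|S| - 2 ≤ (d - 1) + m` and `m ≤ 2(d - 1) - (|S| - 2)`, whence `2|S| ≤ 3d + 1`.
-/

open Finset

namespace CubeShattering

variable {ι : Type*}

/-- `(i, true)` stands for the direction `+eᵢ` and `(i, false)` for `-eᵢ`. -/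
def signedCoord (σ : ι × Bool) (x : ι → ℝ) : ℝ := bif σ.2 then x σ.1 else -x σ.1

def cube (a : ι → ℝ) (r : ℝ) : Set (ι → ℝ) := Set.univ.pi fun i => Set.Icc (a i) (a i + r)

def cubeSupport (a : ι → ℝ) (r : ℝ) (σ : ι × Bool) : ℝ := bif σ.2 then a σ.1 + r else -a σ.1

section Cube

variable {a x y : ι → ℝ} {r : ℝ}

lemma mem_cube_iff : x ∈ cube a r ↔ ∀ σ, signedCoord σ x ≤ cubeSupport a r σ := by
  simp only [cube, Set.mem_univ_pi, Set.mem_Icc, Prod.forall, Bool.forall_bool, signedCoord,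
    cubeSupport, cond_false, cond_true, neg_le_neg_iff]

lemma sub_le_of_mem_cube (hx : x ∈ cube a r) (hy : y ∈ cube a r) (i : ι) : x i - y i ≤ r := by
  have hxi := (Set.mem_univ_pi.1 hx i).2
  have hyi := (Set.mem_univ_pi.1 hy i).1
  linarith

end Cube

section Protrudes

def Protrudes (S E : Finset (ι → ℝ)) (σ : ι × Bool) : Prop :=
  ∃ t ∈ E, ∀ z ∈ S, z ∉ E → signedCoord σ z < signedCoord σ t

variable {S E F : Finset (ι → ℝ)} {σ : ι × Bool} {a x : ι → ℝ} {r : ℝ}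

lemma protrudes_singleton_iff :
    Protrudes S {x} σ ↔ ∀ z ∈ S, z ≠ x → signedCoord σ z < signedCoord σ x := by
  simp [Protrudes]

lemma Protrudes.mono (h : Protrudes S E σ) (hEF : E ⊆ F) : Protrudes S F σ := by
  obtain ⟨t, ht, hlt⟩ := h
  exact ⟨t, hEF ht, fun z hz hzF => hlt z hz fun hzE => hzF (hEF hzE)⟩

lemma Protrudes.not_disjoint (h : Protrudes S E σ) (h' : Protrudes S F σ) (hE : E ⊆ S)
    (hF : F ⊆ S) : ¬Disjoint E F := by
  intro hdisj
  obtain ⟨t, ht, hlt⟩ := h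
  obtain ⟨t', ht', hlt'⟩ := h'
  have h1 := hlt t' (hF ht') (disjoint_right.1 hdisj ht')
  have h2 := hlt' t (hE ht) (disjoint_left.1 hdisj ht)
  linarith

lemma Protrudes.mem_of_singleton (hx : Protrudes S {x} σ) (h : Protrudes S E σ) (hxS : x ∈ S)
    (hES : E ⊆ S) : x ∈ E := by
  simpa using hx.not_disjoint h (singleton_subset_iff.2 hxS) hES

lemma exists_protrudes_of_notMem_cube (hcube : ∀ z ∈ S, z ∈ cube a r ↔ z ∉ E) (hx : x ∈ E)
    (hxc : x ∉ cube a r) : ∃ σ, cubeSupport a r σ < signedCoord σ x ∧ Protrudes S E σ := by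
  obtain ⟨σ, hσ⟩ := not_forall.1 (mt mem_cube_iff.2 hxc)
  refine ⟨σ, not_le.1 hσ, x, hx, fun z hz hzE => ?_⟩
  exact (mem_cube_iff.1 ((hcube z hz).2 hzE) σ).trans_lt (not_le.1 hσ)

end Protrudes

section Diameter

def IsDiameterPair (S : Finset (ι → ℝ)) (i₀ : ι) (p q : ι → ℝ) : Prop :=
  p ∈ S ∧ q ∈ S ∧ ∀ z ∈ S, ∀ w ∈ S, ∀ i, z i - w i ≤ p i₀ - q i₀

variable {S E : Finset (ι → ℝ)} {i₀ : ι} {p q : ι → ℝ} {σ : ι × Bool}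

lemma exists_isDiameterPair [Fintype ι] [Nonempty ι] (hS : S.Nonempty) :
    ∃ i₀ p q, IsDiameterPair S i₀ p q := by
  obtain ⟨⟨p, q, i₀⟩, hmem, hmax⟩ := exists_max_image (S ×ˢ S ×ˢ univ)
    (fun t : (ι → ℝ) × (ι → ℝ) × ι => t.1 t.2.2 - t.2.1 t.2.2)
    (hS.product (hS.product univ_nonempty))
  simp only [mem_product, mem_univ, and_true] at hmem
  exact ⟨i₀, p, q, hmem.1, hmem.2, fun z hz w hw i => hmax (z, w, i) (by simp [hz, hw])⟩

lemma IsDiameterPair.card_le_one (h : IsDiameterPair S i₀ p p) : #S ≤ 1 :=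
  Finset.card_le_one.2 fun z hz w hw => funext fun i => by
    have := h.2.2 z hz w hw i
    have := h.2.2 w hw z hz i
    linarith

lemma IsDiameterPair.fst_ne (h : IsDiameterPair S i₀ p q) (hE : Protrudes S E σ) (hES : E ⊆ S)
    (hp : p ∉ E) (hq : q ∉ E) : σ.1 ≠ i₀ := by
  obtain ⟨t, ht, hlt⟩ := hE
  obtain ⟨i, _ | _⟩ := σ <;> rintro rfl
  · have := hlt q h.2.1 hq
    have := h.2.2 p h.1 t (hES ht) i
    simp only [signedCoord, cond_false] at *
    linarith
  · have := hlt p h.1 hp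
    have := h.2.2 t (hES ht) q h.2.1 i
    simp only [signedCoord, cond_true] at *
    linarith

end Diameter

section Counting

lemma two_mul_card_le_three_mul_card [DecidableEq ι] {J : Finset ι} {I : Finset (ι × Bool)}
    (hI : I ⊆ J ×ˢ univ) (θ : ι → ι × Bool)
    (hθ : ∀ j, (j, true) ∈ I → (j, false) ∈ I → θ j ∈ J ×ˢ univ \ I)
    (hθinj : Set.InjOn θ {j | (j, true) ∈ I ∧ (j, false) ∈ I}) : 2 * #I ≤ 3 * #J := by
  set D := J.filter fun j => (j, true) ∈ I ∧ (j, false) ∈ I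
  have hDI : D ×ˢ {false} ⊆ I := by
    rintro ⟨j, b⟩ hσ
    obtain ⟨hj, rfl⟩ : j ∈ D ∧ b = false := by simpa using hσ
    exact (mem_filter.1 hj).2.2
  have hD : #D ≤ #(J ×ˢ univ \ I) :=
    card_le_card_of_injOn θ (fun j hj => hθ j (mem_filter.1 hj).2.1 (mem_filter.1 hj).2.2)
      fun j hj j' hj' => hθinj (mem_filter.1 hj).2 (mem_filter.1 hj').2
  have hsingle : #(I \ D ×ˢ {false}) ≤ #J := by
    refine card_le_card_of_injOn Prod.fst (fun σ hσ => (mem_product.1 (hI (mem_sdiff.1 hσ).1)).1) ?_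
    rintro ⟨j, b⟩ hσ ⟨j', b'⟩ hσ' (rfl : j = j')
    have hj : j ∈ J := (mem_product.1 (hI (mem_sdiff.1 hσ).1)).1
    simp only [coe_sdiff, Set.mem_sdiff, mem_coe, mem_product, mem_singleton, D, mem_filter]
      at hσ hσ'
    cases b <;> cases b' <;> simp_all
  rw [card_sdiff_of_subset hI, card_product, card_univ, Fintype.card_bool] at hD
  rw [card_sdiff_of_subset hDI, card_product, card_singleton] at hsingle
  have := card_le_card hI
  rw [card_product, card_univ, Fintype.card_bool] at this
  omega

lemma two_mul_card_le_of_protrudes [DecidableEq ι] {S S' : Finset (ι → ℝ)} {J : Finset ι}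
    (hS' : S' ⊆ S) (π : (ι → ℝ) → ι × Bool)
    (hπ : ∀ x ∈ S', π x ∈ J ×ˢ univ ∧ Protrudes S {x} (π x))
    (hpair : ∀ j, (j, true) ∈ S'.image π → (j, false) ∈ S'.image π →
      ∃ σ ∈ J ×ˢ univ, σ.1 ≠ j ∧ Protrudes S (S'.filter fun x => (π x).1 = j) σ) :
    2 * #S' ≤ 3 * #J := by
  have hπinj : Set.InjOn π S' := fun x hx y hy hxy => mem_singleton.1 <|
    (hπ x hx).2.mem_of_singleton (hxy ▸ (hπ y hy).2) (hS' hx) (singleton_subset_iff.2 (hS' hy))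
  set F := fun j => S'.filter fun x => (π x).1 = j
  have hFS : ∀ j, F j ⊆ S := fun j x hx => hS' (mem_filter.1 hx).1
  choose! θ hθJ hθj hθ using hpair
  rw [← card_image_of_injOn hπinj]
  refine two_mul_card_le_three_mul_card ?_ θ ?_ ?_
  · intro σ hσ
    obtain ⟨x, hx, rfl⟩ := mem_image.1 hσ
    exact (hπ x hx).1
  · intro j hjt hjf
    refine mem_sdiff.2 ⟨hθJ j hjt hjf, fun hmem => ?_⟩
    obtain ⟨w, hw, hwθ⟩ := mem_image.1 hmem
    have hwF : w ∈ F j := (hπ w hw).2.mem_of_singleton (hwθ ▸ hθ j hjt hjf) (hS' hw) (hFS j)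
    exact hθj j hjt hjf (hwθ ▸ (mem_filter.1 hwF).2)
  · intro j hj j' hj' hjj'
    obtain ⟨w, hwj, hwj'⟩ := not_disjoint_iff.1 <|
      (hθ j hj.1 hj.2).not_disjoint (hjj' ▸ hθ j' hj'.1 hj'.2) (hFS j) (hFS j')
    exact (mem_filter.1 hwj).2.symm.trans (mem_filter.1 hwj').2

end Counting

section Shattering

variable {d : ℕ} {S : Finset (Fin d → ℝ)} {i₀ j : Fin d} {p q x y : Fin d → ℝ}

lemma Shatters.exists_cube (hS : Shatters (ClosedCubes d) S) (E : Finset (Fin d → ℝ)) :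
    ∃ a r, ∀ z ∈ S, z ∈ cube a r ↔ z ∉ E := by
  obtain ⟨c, ⟨a, r, -, rfl⟩, hc⟩ := hS (S \ E) sdiff_subset
  refine ⟨a, r, fun z hz => ?_⟩
  have := congrArg (z ∈ ·) hc
  simp only [Set.mem_inter_iff, mem_coe, coe_sdiff, Set.mem_sdiff, eq_iff_iff] at this
  simpa [cube, hz] using this

lemma IsDiameterPair.exists_protrudes_singleton (hS : Shatters (ClosedCubes d) S)
    (h : IsDiameterPair S i₀ p q) (hx : x ∈ S) (hxp : x ≠ p) (hxq : x ≠ q) :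
    ∃ σ, σ.1 ≠ i₀ ∧ Protrudes S {x} σ := by
  obtain ⟨a, r, hcube⟩ := Shatters.exists_cube hS {x}
  obtain ⟨σ, -, hσ⟩ := exists_protrudes_of_notMem_cube hcube (mem_singleton_self x)
    (fun hxc => (hcube x hx).1 hxc (mem_singleton_self x))
  exact ⟨σ, h.fst_ne hσ (singleton_subset_iff.2 hx) (by simpa using hxp.symm)
    (by simpa using hxq.symm), hσ⟩

lemma IsDiameterPair.exists_protrudes_pair (hS : Shatters (ClosedCubes d) S)
    (h : IsDiameterPair S i₀ p q) (hx : x ∈ S) (hy : y ∈ S) (hxp : x ≠ p) (hxq : x ≠ q)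
    (hyp : y ≠ p) (hyq : y ≠ q) (hxj : Protrudes S {x} (j, true))
    (hyj : Protrudes S {y} (j, false)) :
    ∃ σ, σ.1 ≠ i₀ ∧ σ.1 ≠ j ∧ Protrudes S {x, y} σ := by
  have hxyS : {x, y} ⊆ S := insert_subset hx (singleton_subset_iff.2 hy)
  have hp : p ∉ ({x, y} : Finset _) := by simp [hxp.symm, hyp.symm]
  have hq : q ∉ ({x, y} : Finset _) := by simp [hxq.symm, hyq.symm]
  obtain ⟨a, r, hcube⟩ := Shatters.exists_cube hS {x, y}
  have hpc := (hcube p h.1).2 hp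
  have exit : ∀ t ∈ ({x, y} : Finset _), ∃ σ, cubeSupport a r σ < signedCoord σ t ∧
      σ.1 ≠ i₀ ∧ Protrudes S {x, y} σ := fun t ht => by
    obtain ⟨σ, hσt, hσ⟩ := exists_protrudes_of_notMem_cube hcube ht
      (fun htc => (hcube t (hxyS ht)).1 htc ht)
    exact ⟨σ, hσt, h.fst_ne hσ hxyS hp hq, hσ⟩
  obtain ⟨⟨i, b⟩, hσx, hi₀, hσ⟩ := exit x (by simp)
  obtain ⟨⟨i', b'⟩, hσy, hi'₀, hσ'⟩ := exit y (by simp)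
  by_cases hij : i = j
  swap
  · exact ⟨(i, b), hi₀, hij, hσ⟩
  by_cases hi'j : i' = j
  swap
  · exact ⟨(i', b'), hi'₀, hi'j, hσ'⟩
  subst i i'
  have hpx := (protrudes_singleton_iff.1 hxj) p h.1 hxp.symm
  have hpy := (protrudes_singleton_iff.1 hyj) p h.1 hyp.symm
  have hp_top := mem_cube_iff.1 hpc (j, true)
  have hp_bot := mem_cube_iff.1 hpc (j, false)
  have hr := sub_le_of_mem_cube hpc ((hcube q h.2.1).2 hq) i₀
  have hxy := h.2.2 x hx y hy j
  -- `x` lies beyond `p` in direction `+eⱼ` and `y` in direction `-eⱼ`, while `p` is in the cube,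
  -- so they leave it through opposite `j`-faces: `r < x j - y j ≤ p i₀ - q i₀ ≤ r`.
  exfalso
  cases b <;> cases b' <;>
    simp only [signedCoord, cubeSupport, cond_true, cond_false] at hσx hσy hpx hpy hp_top hp_bot <;>
    linarith

lemma IsDiameterPair.two_mul_card_le (hS : Shatters (ClosedCubes d) S)
    (h : IsDiameterPair S i₀ p q) : 2 * #((S.erase p).erase q) ≤ 3 * (d - 1) := by
  set S' := (S.erase p).erase q
  have hS' : ∀ x ∈ S', x ∈ S ∧ x ≠ p ∧ x ≠ q := fun x hx => by
    simp only [S', mem_erase] at hx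
    exact ⟨hx.2.2, hx.2.1, hx.1⟩
  have : Nonempty (Fin d) := ⟨i₀⟩
  have hown : ∀ x ∈ S', ∃ σ, σ.1 ≠ i₀ ∧ Protrudes S {x} σ := fun x hx =>
    h.exists_protrudes_singleton hS (hS' x hx).1 (hS' x hx).2.1 (hS' x hx).2.2
  choose! π hπ₀ hπ using hown
  have key := two_mul_card_le_of_protrudes (J := univ.erase i₀) (S' := S')
    (fun x hx => (hS' x hx).1) π (fun x hx => ⟨by simp [hπ₀ x hx], hπ x hx⟩) ?_
  · rwa [card_erase_of_mem (mem_univ _), card_univ, Fintype.card_fin] at key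
  intro j hjt hjf
  obtain ⟨x, hx, hxj⟩ := mem_image.1 hjt
  obtain ⟨y, hy, hyj⟩ := mem_image.1 hjf
  obtain ⟨σ, hσ₀, hσj, hσ⟩ := h.exists_protrudes_pair hS (hS' x hx).1 (hS' y hy).1
    (hS' x hx).2.1 (hS' x hx).2.2 (hS' y hy).2.1 (hS' y hy).2.2 (hxj ▸ hπ x hx) (hyj ▸ hπ y hy)
  refine ⟨σ, by simp [hσ₀], hσj, hσ.mono (insert_subset ?_ (singleton_subset_iff.2 ?_))⟩
  · exact mem_filter.2 ⟨hx, by simp [hxj]⟩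
  · exact mem_filter.2 ⟨hy, by simp [hyj]⟩

end Shattering

end CubeShattering

open CubeShattering in
/-- If a finite set `S ⊆ ℝ^d` (`d ≥ 1`) is shattered by closed cubes then
`|S| ≤ ⌊(3d+1)/2⌋`. -/
theorem card_le_of_shattered_by_cubes (d : ℕ) (hd : 1 ≤ d) (S : Finset (Fin d → ℝ))
    (hS : Shatters (ClosedCubes d) S) : S.card ≤ (3 * d + 1) / 2 := by
  rcases S.eq_empty_or_nonempty with rfl | hne
  · simp
  have : Nonempty (Fin d) := ⟨⟨0, hd⟩⟩
  obtain ⟨i₀, p, q, h⟩ := exists_isDiameterPair hne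
  by_cases hpq : p = q
  · have := (hpq ▸ h).card_le_one
    omega
  have hcard : #((S.erase p).erase q) + 2 = #S := by
    rw [← card_erase_add_one h.1, ← card_erase_add_one (mem_erase.2 ⟨Ne.symm hpq, h.2.1⟩)]
  have := h.two_mul_card_le hS
  omega
end

section
/- For every d ≥ 1 there exists a set of cardinality ⌊(3d+1)/2⌋ in ℝ^d that is shattered by the collection of closed axis-parallel cubes; hence the VC dimension of the ℓ^∞ balls in ℝ^d equals ⌊(3d+1)/2⌋. -/
/-!
Upper bound: choose, for every coordinate `i`, a lowest and a highest point of a shattered set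
`S`; call these `2d` choices slots, owned by the chosen points. A cube cutting away only `x`
misses `x` beyond some face, hence also the extreme point chosen on that side, which must
therefore be `x`; so every point owns a slot. Suppose both slots of a coordinate `i` have owners `x`, `y` owning no other
slot. The cube cutting away exactly `x` and `y` leaves them outside in coordinate `i` but
contains the extreme points of every other coordinate `j`, so `S` is strictly wider in `i` than
in `j`. Hence this happens for at most one coordinate, at most `d + 1` points own exactly one
slot, and `2|S| ≤ 2d + (d + 1)`.

Lower bound: the planar points `(1,1), (-1,2), (-2,-1)` are cut out in all eight patterns by
squares of any side `r ≥ 4` containing the origin, and the points `±4` of the line by intervals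
of side 4 or 8 containing the origin. Copies of the planar configuration in `⌊d/2⌋` disjoint
pairs of coordinates, plus `±4` in the last coordinate when `d` is odd, all vanishing outside
their own block, give `⌊(3d+1)/2⌋` shattered points.
-/

open Finset Function Sum

section Counting

variable {α β : Type*}

def IsLone (f : α → β) (a : α) : Prop := ∀ b, f b = f a → b = a

open Classical in
theorem two_mul_card_le_card_add_card_isLone [Fintype α] [DecidableEq β] (f : α → β)
    (S : Finset β) (hmaps : ∀ a, f a ∈ S) (hsurj : ∀ x ∈ S, ∃ a, f a = x) :
    2 * #S ≤ Fintype.card α + #{a | IsLone f a} := by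
  set L : Finset α := {a | IsLone f a}
  have hfiber_le (x) (hx : x ∈ S) : 2 ≤ #{a | f a = x} + #{a ∈ L | f a = x} := by
    obtain ⟨a, rfl⟩ := hsurj x hx
    by_cases ha : IsLone f a
    · have h1 : 0 < #{b | f b = f a} := card_pos.2 ⟨a, by simp⟩
      have h2 : 0 < #{b ∈ L | f b = f a} := card_pos.2 ⟨a, by simp [L, ha]⟩
      omega
    · obtain ⟨b, hb, hba⟩ : ∃ b, f b = f a ∧ b ≠ a := by simpa [IsLone] using ha
      have : 1 < #{c | f c = f a} := one_lt_card.2 ⟨b, by simp [hb], a, by simp, hba⟩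
      omega
  calc 2 * #S = ∑ x ∈ S, 2 := by rw [sum_const, smul_eq_mul, mul_comm]
    _ ≤ ∑ x ∈ S, (#{a | f a = x} + #{a ∈ L | f a = x}) := sum_le_sum hfiber_le
    _ = Fintype.card α + #L := by
      rw [sum_add_distrib, ← card_univ, ← card_eq_sum_card_fiberwise fun a _ => hmaps a,
        ← card_eq_sum_card_fiberwise fun a _ => hmaps a]

theorem card_le_card_add_card_toLeft_inter_toRight [Fintype α] [DecidableEq α]
    (U : Finset (α ⊕ α)) : #U ≤ Fintype.card α + #(U.toLeft ∩ U.toRight) := by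
  rw [← card_toLeft_add_card_toRight, ← card_union_add_card_inter]
  exact Nat.add_le_add_right (card_le_univ _) _

end Counting

section Cube

variable {ι : Type*}

def cube (a : ι → ℝ) (r : ℝ) : Set (ι → ℝ) :=
  Set.univ.pi fun i => Set.Icc (a i) (a i + r)

theorem mem_cube_iff {a x : ι → ℝ} {r : ℝ} :
    x ∈ cube a r ↔ ∀ i, a i ≤ x i ∧ x i ≤ a i + r := by
  simp only [cube, Set.mem_univ_pi, Set.mem_Icc]

theorem exists_lt_or_lt_of_notMem_cube {a x : ι → ℝ} {r : ℝ} (hx : x ∉ cube a r) :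
    ∃ i, x i < a i ∨ a i + r < x i := by
  simpa only [mem_cube_iff, not_forall, not_and_or, not_le] using hx

end Cube

section UpperBound

variable {d : ℕ} {S : Finset (Fin d → ℝ)} {own : Fin d ⊕ Fin d → Fin d → ℝ}

/-- The slots `inl i` and `inr i` are the lower and the upper side of coordinate `i`. -/
structure IsExtremeChoice (S : Finset (Fin d → ℝ)) (own : Fin d ⊕ Fin d → Fin d → ℝ) :
    Prop where
  mem : ∀ s, own s ∈ S
  inl_le : ∀ i, ∀ z ∈ S, own (inl i) i ≤ z i
  le_inr : ∀ i, ∀ z ∈ S, z i ≤ own (inr i) i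

theorem exists_isExtremeChoice (hS : S.Nonempty) : ∃ own, IsExtremeChoice S own := by
  choose lo hlo hlo_le using fun i => S.exists_min_image (fun z => z i) hS
  choose hi hhi hle_hi using fun i => S.exists_max_image (fun z => z i) hS
  exact ⟨Sum.elim lo hi, Sum.forall.2 ⟨hlo, hhi⟩, hlo_le, hle_hi⟩

theorem exists_cube_inter_eq_sdiff (hS : Shatters (ClosedCubes d) S) (E : Finset (Fin d → ℝ)) :
    ∃ a r, (S : Set (Fin d → ℝ)) ∩ cube a r = ↑(S \ E) := by
  obtain ⟨_, ⟨a, r, -, rfl⟩, hc⟩ := hS (S \ E) sdiff_subset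
  exact ⟨a, r, hc⟩

theorem mem_cube_of_inter_eq_sdiff {E : Finset (Fin d → ℝ)} {a : Fin d → ℝ} {r : ℝ}
    (hc : (S : Set (Fin d → ℝ)) ∩ cube a r = ↑(S \ E)) {z : Fin d → ℝ} (hz : z ∈ S) :
    z ∈ cube a r ↔ z ∉ E := by
  have := Set.ext_iff.1 hc z
  simp only [Set.mem_inter_iff, mem_coe, coe_sdiff, Set.mem_sdiff, hz, true_and] at this
  exact this

theorem IsExtremeChoice.exists_escape (h : IsExtremeChoice S own) {E : Finset (Fin d → ℝ)}
    {a : Fin d → ℝ} {r : ℝ} (hc : (S : Set (Fin d → ℝ)) ∩ cube a r = ↑(S \ E))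
    {x : Fin d → ℝ} (hx : x ∈ S) (hxE : x ∈ E) :
    ∃ k, (x k < a k ∧ own (inl k) ∈ E) ∨ (a k + r < x k ∧ own (inr k) ∈ E) := by
  have hmem {z} (hz : z ∈ S) := mem_cube_of_inter_eq_sdiff hc hz
  obtain ⟨k, hk⟩ := exists_lt_or_lt_of_notMem_cube (mt (hmem hx).1 (not_not.2 hxE))
  refine ⟨k, hk.imp (fun hlt => ⟨hlt, ?_⟩) (fun hlt => ⟨hlt, ?_⟩)⟩
  · by_contra hE
    have := (mem_cube_iff.1 ((hmem (h.mem _)).2 hE) k).1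
    linarith [h.inl_le k x hx]
  · by_contra hE
    have := (mem_cube_iff.1 ((hmem (h.mem _)).2 hE) k).2
    linarith [h.le_inr k x hx]

theorem IsExtremeChoice.exists_eq (h : IsExtremeChoice S own) (hS : Shatters (ClosedCubes d) S)
    {x : Fin d → ℝ} (hx : x ∈ S) : ∃ s, own s = x := by
  obtain ⟨a, r, hc⟩ := exists_cube_inter_eq_sdiff hS {x}
  obtain ⟨k, ⟨-, hk⟩ | ⟨-, hk⟩⟩ := h.exists_escape hc hx (mem_singleton_self x)
  exacts [⟨inl k, mem_singleton.1 hk⟩, ⟨inr k, mem_singleton.1 hk⟩]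

theorem notMem_pair_of_isLone {s t u : Fin d ⊕ Fin d} (hs : IsLone own s) (ht : IsLone own t)
    (hus : u ≠ s) (hut : u ≠ t) : own u ∉ ({own s, own t} : Finset _) := by
  simp only [mem_insert, mem_singleton, not_or]
  exact ⟨mt (hs u) hus, mt (ht u) hut⟩

theorem IsExtremeChoice.lt_or_lt_of_isLone (h : IsExtremeChoice S own) {i : Fin d}
    (hl : IsLone own (inl i)) (hr : IsLone own (inr i)) {a : Fin d → ℝ} {r : ℝ}
    (hc : (S : Set (Fin d → ℝ)) ∩ cube a r = ↑(S \ {own (inl i), own (inr i)}))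
    {x : Fin d → ℝ} (hx : x ∈ ({own (inl i), own (inr i)} : Finset _)) :
    x i < a i ∨ a i + r < x i := by
  have hxS : x ∈ S := by
    rcases mem_insert.1 hx with rfl | hx
    exacts [h.mem _, mem_singleton.1 hx ▸ h.mem _]
  obtain ⟨k, ⟨hlt, hk⟩ | ⟨hlt, hk⟩⟩ := h.exists_escape hc hxS hx
  · obtain rfl : k = i := by_contra fun hki =>
      notMem_pair_of_isLone hl hr (by simpa using hki) (by simp) hk
    exact Or.inl hlt
  · obtain rfl : k = i := by_contra fun hki =>
      notMem_pair_of_isLone hl hr (by simp) (by simpa using hki) hk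
    exact Or.inr hlt

theorem IsExtremeChoice.width_lt (h : IsExtremeChoice S own) (hS : Shatters (ClosedCubes d) S)
    {i j : Fin d} (hij : i ≠ j) (hli : IsLone own (inl i)) (hri : IsLone own (inr i)) :
    own (inr j) j - own (inl j) j < own (inr i) i - own (inl i) i := by
  obtain ⟨a, r, hc⟩ := exists_cube_inter_eq_sdiff hS {own (inl i), own (inr i)}
  have hin {s} (hsl : s ≠ inl i) (hsr : s ≠ inr i) : ∀ k, a k ≤ own s k ∧ own s k ≤ a k + r :=
    mem_cube_iff.1 <| (mem_cube_of_inter_eq_sdiff hc (h.mem s)).2 <|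
      notMem_pair_of_isLone hli hri hsl hsr
  have hlj_in := hin (s := inl j) (by simpa using hij.symm) (by simp)
  have hrj_in := hin (s := inr j) (by simp) (by simpa using hij.symm)
  -- `own (inl j)` is a point of `S` inside the cube, hence between the extremes in coordinate `i`
  have hlo : own (inl i) i < a i :=
    (h.lt_or_lt_of_isLone hli hri hc (by simp)).resolve_right <|
      not_lt.2 <| (h.inl_le i _ (h.mem (inl j))).trans (hlj_in i).2
  have hhi : a i + r < own (inr i) i :=
    (h.lt_or_lt_of_isLone hli hri hc (by simp)).resolve_left <|
      not_lt.2 <| (hlj_in i).1.trans (h.le_inr i _ (h.mem (inl j)))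
  linarith [hlj_in j, hrj_in j]

open Classical in
theorem two_mul_card_le_of_shatters (hS : Shatters (ClosedCubes d) S) : 2 * #S ≤ 3 * d + 1 := by
  rcases S.eq_empty_or_nonempty with rfl | hne
  · simp
  obtain ⟨own, h⟩ := exists_isExtremeChoice hne
  have hcount := two_mul_card_le_card_add_card_isLone own S h.mem fun _ hx => h.exists_eq hS hx
  set U : Finset (Fin d ⊕ Fin d) := {s | IsLone own s}
  have hU : #(U.toLeft ∩ U.toRight) ≤ 1 := card_le_one.2 fun i hi j hj => by
    simp only [mem_inter, mem_toLeft, mem_toRight, U, mem_filter, mem_univ, true_and] at hi hj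
    by_contra hij
    linarith [h.width_lt hS hij hi.1 hi.2, h.width_lt hS (Ne.symm hij) hj.1 hj.2]
  have hslots := card_le_card_add_card_toLeft_inter_toRight U
  simp only [Fintype.card_sum, Fintype.card_fin] at hcount hslots
  omega

end UpperBound

section LowerBound

variable {T U ι κ : Type*} {r : ℝ}

/-- The origin condition lets families supported on disjoint coordinate blocks be combined. -/
def CutsOut (r : ℝ) (p : T → ι → ℝ) (B : Set T) : Prop :=
  ∃ a, 0 ∈ cube a r ∧ ∀ t, p t ∈ cube a r ↔ t ∈ B

theorem injective_of_cutsOut {p : T → ι → ℝ} (hp : ∀ B, ∃ r, CutsOut r p B) : Injective p := by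
  intro t u htu
  obtain ⟨r, a, -, ha⟩ := hp {t}
  exact ((ha u).1 (htu ▸ (ha t).2 rfl)).symm

theorem exists_shatters_card_eq_of_cutsOut [Fintype T] [Fintype ι] {d : ℕ} (hι : Fintype.card ι = d)
    {p : T → ι → ℝ} (hp : ∀ B, ∃ r, 0 ≤ r ∧ CutsOut r p B) :
    ∃ S : Finset (Fin d → ℝ), #S = Fintype.card T ∧ Shatters (ClosedCubes d) S := by
  classical
  let e := Fintype.equivFinOfCardEq hι
  have hmem {a x : ι → ℝ} {r : ℝ} : x ∘ e.symm ∈ cube (a ∘ e.symm) r ↔ x ∈ cube a r := by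
    simp only [mem_cube_iff, comp_apply]
    exact (e.forall_congr_left (p := fun i => a i ≤ x i ∧ x i ≤ a i + r)).symm
  let q : T ↪ (Fin d → ℝ) :=
    ⟨fun t => p t ∘ e.symm, (e.symm.surjective.injective_comp_right).comp
      (injective_of_cutsOut fun B => (hp B).imp fun _ => And.right)⟩
  refine ⟨univ.map q, by simp, fun A hA => ?_⟩
  obtain ⟨r, hr, a, -, ha⟩ := hp {t | q t ∈ A}
  refine ⟨cube (a ∘ e.symm) r, ⟨a ∘ e.symm, r, hr, rfl⟩, Set.ext fun x => ?_⟩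
  simp only [Set.mem_inter_iff, coe_map, coe_univ, Set.image_univ, Set.mem_range]
  constructor
  · rintro ⟨⟨t, rfl⟩, hx⟩
    exact (ha t).1 (hmem.1 hx)
  · intro hx
    obtain ⟨t, -, rfl⟩ := mem_map.1 (hA hx)
    exact ⟨⟨t, rfl⟩, hmem.2 ((ha t).2 hx)⟩

def blockPoints [DecidableEq κ] (p : T → ι → ℝ) : κ × T → κ × ι → ℝ :=
  fun x j => if j.1 = x.1 then p x.2 j.2 else 0

theorem cutsOut_blockPoints [DecidableEq κ] {p : T → ι → ℝ} (hp : ∀ B, CutsOut r p B)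
    (B : Set (κ × T)) : CutsOut r (blockPoints p) B := by
  choose a ha₀ ha using fun k => hp {t | (k, t) ∈ B}
  refine ⟨fun j => a j.1 j.2, mem_cube_iff.2 fun j => mem_cube_iff.1 (ha₀ j.1) j.2,
    fun ⟨k, t⟩ => ?_⟩
  rw [← Set.mem_ofPred_eq (p := fun t => (k, t) ∈ B), ← ha k t, mem_cube_iff, mem_cube_iff]
  simp only [blockPoints, Prod.forall]
  refine ⟨fun H i => by simpa using H k i, fun H k' i => ?_⟩
  split_ifs with hk
  · exact hk ▸ H i
  · exact mem_cube_iff.1 (ha₀ k') i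

def sumPoints (p : T → ι → ℝ) (q : U → κ → ℝ) : T ⊕ U → ι ⊕ κ → ℝ :=
  Sum.elim (fun t => Sum.elim (p t) 0) (fun u => Sum.elim 0 (q u))

theorem cutsOut_sumPoints {p : T → ι → ℝ} {q : U → κ → ℝ} {B : Set (T ⊕ U)}
    (hp : CutsOut r p (inl ⁻¹' B)) (hq : CutsOut r q (inr ⁻¹' B)) :
    CutsOut r (sumPoints p q) B := by
  obtain ⟨a, ha₀, ha⟩ := hp
  obtain ⟨b, hb₀, hb⟩ := hq
  rw [mem_cube_iff] at ha₀ hb₀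
  refine ⟨Sum.elim a b, mem_cube_iff.2 (Sum.forall.2 ⟨ha₀, hb₀⟩), ?_⟩
  rintro (t | u)
  · refine Iff.trans ?_ (ha t)
    rw [mem_cube_iff, mem_cube_iff]
    simp only [sumPoints, Sum.forall, Sum.elim_inl, Sum.elim_inr, Pi.zero_apply]
    exact and_iff_left hb₀
  · refine Iff.trans ?_ (hb u)
    rw [mem_cube_iff, mem_cube_iff]
    simp only [sumPoints, Sum.forall, Sum.elim_inl, Sum.elim_inr, Pi.zero_apply]
    exact and_iff_right ha₀

def triangle : Fin 3 → Fin 2 → ℝ := ![![1, 1], ![-1, 2], ![-2, -1]]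

theorem cutsOut_triangle (hr : 4 ≤ r) (B : Set (Fin 3)) : CutsOut r triangle B := by
  have key (a : Fin 2 → ℝ) (h : (∀ k, a k ≤ 0 ∧ 0 ≤ a k + r) ∧
      ∀ t, (∀ k, a k ≤ triangle t k ∧ triangle t k ≤ a k + r) ↔ t ∈ B) : CutsOut r triangle B :=
    ⟨a, mem_cube_iff.2 h.1, fun t => mem_cube_iff.trans (h.2 t)⟩
  by_cases h0 : 0 ∈ B <;> by_cases h1 : 1 ∈ B <;> by_cases h2 : 2 ∈ B
  -- As `r ≥ 4`, a corner entry `c` keeps the points with coordinate `≥ c`, and `c - r` those `≤ c`.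
  on_goal 1 => apply key ![-2, -2]
  on_goal 2 => apply key ![-1, 0]
  on_goal 3 => apply key ![-2, 1 - r]
  on_goal 4 => apply key ![0, 1 - r]
  on_goal 5 => apply key ![-r, -2]
  on_goal 6 => apply key ![-r, 0]
  on_goal 7 => apply key ![-r, -r]
  on_goal 8 => apply key ![0, -r]
  all_goals refine ⟨?_, fun t => ?_⟩
  all_goals try fin_cases t
  all_goals simp [Fin.forall_fin_two, triangle, h0, h1, h2] <;> grind

def signPair : Fin 2 → Fin 1 → ℝ := ![![-4], ![4]]

theorem exists_cutsOut_signPair (B : Set (Fin 2)) : ∃ r, 4 ≤ r ∧ CutsOut r signPair B := by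
  have key (r c : ℝ) (hr : 4 ≤ r) (h : (c ≤ 0 ∧ 0 ≤ c + r) ∧
      ∀ t, (c ≤ signPair t 0 ∧ signPair t 0 ≤ c + r) ↔ t ∈ B) :
      ∃ r, 4 ≤ r ∧ CutsOut r signPair B :=
    ⟨r, hr, fun _ => c, mem_cube_iff.2 fun _ => h.1,
      fun t => mem_cube_iff.trans (Fin.forall_fin_one.trans (h.2 t))⟩
  by_cases h0 : 0 ∈ B <;> by_cases h1 : 1 ∈ B
  on_goal 1 => refine key 8 (-4) (by norm_num) ?_
  on_goal 2 => refine key 4 (-4) le_rfl ?_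
  on_goal 3 => refine key 4 0 le_rfl ?_
  on_goal 4 => refine key 4 (-2) le_rfl ?_
  all_goals refine ⟨by norm_num, fun t => ?_⟩
  all_goals fin_cases t <;> norm_num [signPair, h0, h1]

end LowerBound

theorem exists_shatters_card_eq_three_mul_add_one_div_two (d : ℕ) :
    ∃ S : Finset (Fin d → ℝ), #S = (3 * d + 1) / 2 ∧ Shatters (ClosedCubes d) S := by
  obtain ⟨m, rfl | rfl⟩ := Nat.even_or_odd' d
  · obtain ⟨S, hcard, hS⟩ := exists_shatters_card_eq_of_cutsOut (ι := Fin m × Fin 2)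
      (p := blockPoints (κ := Fin m) triangle) (d := 2 * m) (by simp [mul_comm])
      fun B => ⟨4, by norm_num, cutsOut_blockPoints (cutsOut_triangle le_rfl) B⟩
    exact ⟨S, by simp only [hcard, Fintype.card_prod, Fintype.card_fin]; omega, hS⟩
  · obtain ⟨S, hcard, hS⟩ := exists_shatters_card_eq_of_cutsOut (ι := (Fin m × Fin 2) ⊕ Fin 1)
      (p := sumPoints (blockPoints (κ := Fin m) triangle) signPair) (d := 2 * m + 1)
      (by simp [mul_comm])
      fun B => by
        obtain ⟨r, hr, h⟩ := exists_cutsOut_signPair (inr ⁻¹' B)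
        exact ⟨r, by linarith, cutsOut_sumPoints (cutsOut_blockPoints (cutsOut_triangle hr) _) h⟩
    exact ⟨S, by simp only [hcard, Fintype.card_sum, Fintype.card_prod, Fintype.card_fin]; omega,
      hS⟩

theorem vc_dim_cubes_eq_general (d : ℕ) :
    (∃ S : Finset (Fin d → ℝ), S.card = (3 * d + 1) / 2 ∧ Shatters (ClosedCubes d) S) ∧
    (∀ S : Finset (Fin d → ℝ), Shatters (ClosedCubes d) S → S.card ≤ (3 * d + 1) / 2) :=
  ⟨exists_shatters_card_eq_three_mul_add_one_div_two d, fun _ hS =>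
    (Nat.le_div_iff_mul_le two_pos).2 (by linarith [two_mul_card_le_of_shatters hS])⟩

/-- For every `d ≥ 1` there is a set of cardinality `⌊(3d+1)/2⌋` in `ℝ^d` shattered by
closed cubes; together with the upper bound, the VC dimension of the ℓ^∞ balls in `ℝ^d`
equals `⌊(3d+1)/2⌋`. -/
theorem vc_dim_cubes_eq (d : ℕ) (hd : 1 ≤ d) :
    (∃ S : Finset (Fin d → ℝ), S.card = (3 * d + 1) / 2 ∧ Shatters (ClosedCubes d) S) ∧
    (∀ S : Finset (Fin d → ℝ), Shatters (ClosedCubes d) S → S.card ≤ (3 * d + 1) / 2) :=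
  vc_dim_cubes_eq_general d
end

section
/- Let S ⊆ ℝ^d be a finite set shattered by closed cubes, and for each coordinate i let l^i, u^i ∈ S attain the minimum and maximum i-th coordinate over S. Then every point of S appears at least once in the list (l¹,u¹),…,(l^d,u^d). -/
/-- If a finite `S ⊆ ℝ^d` is shattered by closed cubes and `l i, u i ∈ S` attain the
minimum and maximum `i`-th coordinate over `S`, then every point of `S` appears in the
list `(l 1, u 1), …, (l d, u d)`. -/
theorem every_point_is_extremal (d : ℕ) (S : Finset (Fin d → ℝ))
    (hS : Shatters (ClosedCubes d) S)
    (l u : Fin d → (Fin d → ℝ))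
    (hl : ∀ i, l i ∈ S) (hu : ∀ i, u i ∈ S)
    (hlmin : ∀ i, ∀ s ∈ S, l i i ≤ s i)
    (humax : ∀ i, ∀ s ∈ S, s i ≤ u i i) :
    ∀ s ∈ S, ∃ i : Fin d, s = l i ∨ s = u i := by
  intro s hs
  by_contra h
  push_neg at h
  obtain ⟨c, hc, hSc⟩ := hS (S.erase s) (Finset.erase_subset _ _)
  obtain ⟨a, r, hr, rfl⟩ := hc
  have hsc : s ∈ Set.univ.pi fun i => Set.Icc (a i) (a i + r) := by
    intro j _
    have hlj : l j ∈ (S : Set (Fin d → ℝ)) ∩ Set.univ.pi fun i => Set.Icc (a i) (a i + r) := by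
      rw [hSc]
      exact Finset.mem_coe.2 (Finset.mem_erase.2 ⟨fun e => (h j).1 e.symm, hl j⟩)
    have huj : u j ∈ (S : Set (Fin d → ℝ)) ∩ Set.univ.pi fun i => Set.Icc (a i) (a i + r) := by
      rw [hSc]
      exact Finset.mem_coe.2 (Finset.mem_erase.2 ⟨fun e => (h j).2 e.symm, hu j⟩)
    have h1 := hlj.2 j (Set.mem_univ j)
    have h2 := huj.2 j (Set.mem_univ j)
    exact ⟨h1.1.trans (hlmin j s hs), (humax j s hs).trans h2.2⟩
  have : s ∈ (S : Set (Fin d → ℝ)) ∩ Set.univ.pi fun i => Set.Icc (a i) (a i + r) := ⟨hs, hsc⟩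
  rw [hSc] at this
  exact (Finset.mem_erase.1 (Finset.mem_coe.1 this)).1 rfl
end

section
/- Let S ⊆ ℝ^d be finite and shattered by closed axis-parallel cubes, and fix for each i extremal points l^i, u^i ∈ S attaining the coordinate minimum and maximum. Then the number k of points of S appearing exactly once among the 2d entries (l¹,u¹,…,l^d,u^d) satisfies k ≤ d + 1. -/
/-!
If both `l j` and `u j` occur only once in the list of extremal points, a cube carving
`S \ {l j, u j}` out of `S` still contains `l m` and `u m` for every `m ≠ j`, so it covers the
whole range of `S` in each coordinate `m ≠ j`. Hence it must cut off `l j` and `u j` in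
coordinate `j`, on both sides, and its side is strictly smaller than the width `u j j - l j j`,
while it is at least the width of every other coordinate. So at most one coordinate has both its
extremal points occurring once, and the `2d` positions then hold at most `d + 1` such points.
-/

open Finset

lemma Shatters.exists_mem_iff_not_mem {Ω : Type*} {C : Set (Set Ω)} {S : Finset Ω}
    (hS : Shatters C S) (A : Finset Ω) : ∃ c ∈ C, ∀ x ∈ S, x ∈ c ↔ x ∉ A := by
  classical
  obtain ⟨c, hc, hSc⟩ := hS (S \ A) sdiff_subset
  refine ⟨c, hc, fun x hx => ?_⟩
  have := congrArg (x ∈ ·) hSc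
  simpa [hx] using this

section ExtremalCount

variable {ι β : Type*} [Fintype ι] [DecidableEq β]

/-- Position `(i, false)` holds `l i` and position `(i, true)` holds `u i`. -/
def extremalPoint (l u : ι → β) (p : ι × Bool) : β := if p.2 then u p.1 else l p.1

def extremalCount (l u : ι → β) (s : β) : ℕ := #{p | extremalPoint l u p = s}

variable {l u : ι → β}

lemma extremalPoint_ne_of_extremalCount_eq_one {p q : ι × Bool}
    (h : extremalCount l u (extremalPoint l u q) = 1) (hpq : p ≠ q) :
    extremalPoint l u p ≠ extremalPoint l u q := fun hp =>
  hpq <| card_le_one.mp h.le p (by simpa using hp) q (by simp)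

lemma exists_extremalPoint_eq_of_extremalCount_eq_one {s : β} (h : extremalCount l u s = 1) :
    ∃ p, extremalPoint l u p = s := by
  obtain ⟨p, hp⟩ := card_pos.mp (h ▸ Nat.one_pos : 0 < extremalCount l u s)
  exact ⟨p, (mem_filter.mp hp).2⟩

lemma filter_extremalCount_eq_one_subset (S : Finset β) :
    {s ∈ S | extremalCount l u s = 1} ⊆
      image l {i | extremalCount l u (l i) = 1} ∪ image u {i | extremalCount l u (u i) = 1} := by
  intro s hs
  obtain ⟨hsS, hs1⟩ := mem_filter.mp hs
  obtain ⟨⟨i, b⟩, rfl⟩ := exists_extremalPoint_eq_of_extremalCount_eq_one hs1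
  cases b
  · exact mem_union_left _ (mem_image_of_mem l (by simpa [extremalPoint] using hs1))
  · exact mem_union_right _ (mem_image_of_mem u (by simpa [extremalPoint] using hs1))

lemma card_filter_extremalCount_eq_one_le (S : Finset β) :
    #{s ∈ S | extremalCount l u s = 1} ≤
      Fintype.card ι + #{i | extremalCount l u (l i) = 1 ∧ extremalCount l u (u i) = 1} := by
  classical
  set L : Finset ι := {i | extremalCount l u (l i) = 1}
  set U : Finset ι := {i | extremalCount l u (u i) = 1}
  calc #{s ∈ S | extremalCount l u s = 1}
      ≤ #(image l L ∪ image u U) := card_le_card (filter_extremalCount_eq_one_subset S)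
    _ ≤ #L + #U := card_union_le _ _ |>.trans (add_le_add card_image_le card_image_le)
    _ = #(L ∪ U) + #(L ∩ U) := (card_union_add_card_inter L U).symm
    _ ≤ Fintype.card ι + #(L ∩ U) := by gcongr; exact card_le_univ _
    _ = _ := by rw [← filter_and]

end ExtremalCount

section Cubes

variable {d : ℕ} {S : Finset (Fin d → ℝ)} {l u : Fin d → Fin d → ℝ}

lemma width_lt_of_extremalCount_eq_one (hS : Shatters (ClosedCubes d) S)
    (hl : ∀ i, l i ∈ S) (hu : ∀ i, u i ∈ S)
    (hlmin : ∀ i, ∀ s ∈ S, l i i ≤ s i) (humax : ∀ i, ∀ s ∈ S, s i ≤ u i i)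
    {i j : Fin d} (hij : i ≠ j)
    (hlj : extremalCount l u (l j) = 1) (huj : extremalCount l u (u j) = 1) :
    u i i - l i i < u j j - l j j := by
  obtain ⟨_, ⟨a, r, -, rfl⟩, hcube⟩ := hS.exists_mem_iff_not_mem {l j, u j}
  simp only [Set.mem_univ_pi, mem_insert, mem_singleton, not_or] at hcube
  have hne : ∀ m ≠ j, ∀ b, extremalPoint l u (m, b) ≠ l j ∧ extremalPoint l u (m, b) ≠ u j :=
    fun m hm b => ⟨extremalPoint_ne_of_extremalCount_eq_one (q := (j, false)) hlj (by simp [hm]),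
      extremalPoint_ne_of_extremalCount_eq_one (q := (j, true)) huj (by simp [hm])⟩
  have hl_mem : ∀ m ≠ j, ∀ k, l m k ∈ Set.Icc (a k) (a k + r) := fun m hm =>
    (hcube _ (hl m)).mpr (hne m hm false)
  have hu_mem : ∀ m ≠ j, ∀ k, u m k ∈ Set.Icc (a k) (a k + r) := fun m hm =>
    (hcube _ (hu m)).mpr (hne m hm true)
  have hcover : ∀ m ≠ j, ∀ s ∈ S, s m ∈ Set.Icc (a m) (a m + r) := fun m hm s hs =>
    ⟨(hl_mem m hm m).1.trans (hlmin m s hs), (humax m s hs).trans (hu_mem m hm m).2⟩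
  have hescape : ∀ x ∈ S, (x = l j ∨ x = u j) → x j ∉ Set.Icc (a j) (a j + r) := by
    intro x hx hxj hxIcc
    have hx_out : ¬ ∀ k, x k ∈ Set.Icc (a k) (a k + r) := by rw [hcube x hx]; tauto
    refine hx_out fun k => ?_
    obtain rfl | hk := eq_or_ne k j
    exacts [hxIcc, hcover k hk x hx]
  have hlj_lt : l j j < a j := by
    by_contra! h
    exact hescape _ (hl j) (Or.inl rfl)
      ⟨h, (hlmin j _ (hl i)).trans (hl_mem i hij j).2⟩
  have huj_gt : a j + r < u j j := by
    by_contra! h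
    exact hescape _ (hu j) (Or.inr rfl)
      ⟨(hu_mem i hij j).1.trans (humax j _ (hu i)), h⟩
  have hwidth_i : u i i - l i i ≤ r := by
    linarith [(hl_mem i hij i).1, (hu_mem i hij i).2]
  linarith

end Cubes

/-- Let `S ⊆ ℝ^d` be finite and shattered by closed cubes, with extremal points `l i, u i ∈ S`
attaining the coordinate minimum and maximum in each coordinate `i`.  Then the number of
points of `S` appearing exactly once among the `2d` entries `(l 1, u 1, …, l d, u d)` is at
most `d + 1`.  (Position `(i, false)` holds `l i`, position `(i, true)` holds `u i`.) -/
theorem card_appearing_once_le (d : ℕ) (S : Finset (Fin d → ℝ))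
    (hS : Shatters (ClosedCubes d) S)
    (l u : Fin d → (Fin d → ℝ))
    (hl : ∀ i, l i ∈ S) (hu : ∀ i, u i ∈ S)
    (hlmin : ∀ i, ∀ s ∈ S, l i i ≤ s i)
    (humax : ∀ i, ∀ s ∈ S, s i ≤ u i i) :
    (S.filter fun s =>
        (Finset.univ.filter fun p : Fin d × Bool =>
          (if p.2 then u p.1 else l p.1) = s).card = 1).card ≤ d + 1 := by
  have hdouble : #{i | extremalCount l u (l i) = 1 ∧ extremalCount l u (u i) = 1} ≤ 1 := by
    refine card_le_one.mpr fun i hi j hj => ?_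
    simp only [mem_filter, mem_univ, true_and] at hi hj
    by_contra hij
    have := width_lt_of_extremalCount_eq_one hS hl hu hlmin humax hij hj.1 hj.2
    have := width_lt_of_extremalCount_eq_one hS hl hu hlmin humax (Ne.symm hij) hi.1 hi.2
    linarith
  calc #{s ∈ S | extremalCount l u s = 1}
      ≤ Fintype.card (Fin d) + #{i | extremalCount l u (l i) = 1 ∧ extremalCount l u (u i) = 1} :=
        card_filter_extremalCount_eq_one_le S
    _ ≤ d + 1 := by rw [Fintype.card_fin]; omega
end

section
/- Let d ≥ 1, let S ⊆ ℝ^d be finite, and suppose A ⊆ S is carved out by a set I = I₁ × ⋯ × I_d where each I_j is either ℝ, a left semi-infinite closed interval (−∞, x], or a right semi-infinite closed interval [x, ∞). Then there is a closed cube C of side length diam_∞(A) with C ⊆ I and S ∩ C = A. -/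
/-- Membership in the class `H` of intervals: `ℝ` itself, a left semi-infinite closed
interval `(−∞, x]`, or a right semi-infinite closed interval `[x, ∞)`. -/
def IsHInterval (I : Set ℝ) : Prop :=
  (∃ x : ℝ, I = Set.Iic x) ∨ (∃ x : ℝ, I = Set.Ici x) ∨ I = Set.univ

/-- If `A ⊆ S` is carved out from the finite set `S ⊆ ℝ^d` by a product `I = I₁ × ⋯ × I_d`
of members of `H`, then there is a closed cube of side length `diam_∞(A)` contained in `I`
carving out `A`.  (The product metric on `Fin d → ℝ` is the sup metric, so `Metric.diam`
is the ℓ^∞ diameter.) -/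
theorem cube_constructor (d : ℕ) (hd : 1 ≤ d) (S : Finset (Fin d → ℝ))
    (A : Finset (Fin d → ℝ)) (hA : A ⊆ S)
    (I : Fin d → Set ℝ) (hI : ∀ j, IsHInterval (I j))
    (hcarve : (S : Set (Fin d → ℝ)) ∩ Set.univ.pi I = (A : Set (Fin d → ℝ))) :
    ∃ a : Fin d → ℝ,
      (Set.univ.pi fun j => Set.Icc (a j) (a j + Metric.diam (A : Set (Fin d → ℝ))))
        ⊆ Set.univ.pi I ∧
      (S : Set (Fin d → ℝ)) ∩
        (Set.univ.pi fun j => Set.Icc (a j) (a j + Metric.diam (A : Set (Fin d → ℝ))))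
        = (A : Set (Fin d → ℝ)) := by
  classical
  set r := Metric.diam (A : Set (Fin d → ℝ)) with hrdef
  rcases A.eq_empty_or_nonempty with hAe | hne
  · -- A is empty
    subst hAe
    have hr0 : r = 0 := by simp [hrdef]
    have hne' : ∀ j, ∃ x, x ∈ I j := by
      intro j
      rcases hI j with ⟨x, hx⟩ | ⟨x, hx⟩ | hx
      · exact ⟨x, by simp [hx]⟩
      · exact ⟨x, by simp [hx]⟩
      · exact ⟨0, by simp [hx]⟩
    choose a ha using hne'
    have hsub : (Set.univ.pi fun j => Set.Icc (a j) (a j + r)) ⊆ Set.univ.pi I := by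
      intro y hy j _
      have h1 := hy j trivial
      simp only [hr0, add_zero, Set.mem_Icc] at h1
      have : y j = a j := le_antisymm h1.2 h1.1
      rw [this]; exact ha j
    refine ⟨a, hsub, ?_⟩
    apply Set.Subset.antisymm
    · intro x hx
      rw [← hcarve]
      exact ⟨hx.1, hsub hx.2⟩
    · simp
  · -- A is nonempty
    have hr0 : 0 ≤ r := Metric.diam_nonneg
    have hmem : ∀ p ∈ A, ∀ j, p j ∈ I j := by
      intro p hp j
      have hp' : p ∈ (S : Set (Fin d → ℝ)) ∩ Set.univ.pi I := by
        rw [hcarve]; exact Finset.mem_coe.2 hp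
      exact hp'.2 j trivial
    have key : ∀ p ∈ A, ∀ q ∈ A, ∀ j, p j - q j ≤ r := by
      intro p hp q hq j
      have h1 : dist (p j) (q j) ≤ dist p q := dist_le_pi_dist p q j
      have h2 : dist p q ≤ r :=
        Metric.dist_le_diam_of_mem (A.finite_toSet.isBounded)
          (Finset.mem_coe.2 hp) (Finset.mem_coe.2 hq)
      calc p j - q j ≤ |p j - q j| := le_abs_self _
        _ = dist (p j) (q j) := (Real.dist_eq _ _).symm
        _ ≤ r := h1.trans h2
    set a : Fin d → ℝ := fun j =>
      if ∃ x, I j = Set.Iic x then A.sup' hne (fun p => p j) - r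
      else A.inf' hne (fun p => p j) with hadef
    have hsub : (Set.univ.pi fun j => Set.Icc (a j) (a j + r)) ⊆ Set.univ.pi I := by
      intro y hy j _
      have hyj := hy j trivial
      by_cases h : ∃ x, I j = Set.Iic x
      · have haj : a j = A.sup' hne (fun p => p j) - r := by
          simp only [hadef, if_pos h]
        obtain ⟨x, hx⟩ := h
        have hsup : A.sup' hne (fun p => p j) ≤ x :=
          Finset.sup'_le _ _ fun p hp => by
            have := hmem p hp j; rwa [hx] at this
        rw [hx]
        have := hyj.2
        rw [haj] at this
        simp only [Set.mem_Iic]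
        linarith
      · have haj : a j = A.inf' hne (fun p => p j) := by
          simp only [hadef, if_neg h]
        rcases hI j with hc | ⟨x, hx⟩ | hx
        · exact absurd hc h
        · have hinf : x ≤ A.inf' hne (fun p => p j) :=
            Finset.le_inf' _ _ fun p hp => by
              have := hmem p hp j; rwa [hx] at this
          rw [hx]
          have := hyj.1
          rw [haj] at this
          simp only [Set.mem_Ici]
          linarith
        · rw [hx]; trivial
    have hAc : (A : Set (Fin d → ℝ)) ⊆ Set.univ.pi fun j => Set.Icc (a j) (a j + r) := by
      intro p hp j _
      have hpA : p ∈ A := Finset.mem_coe.1 hp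
      by_cases h : ∃ x, I j = Set.Iic x
      · have haj : a j = A.sup' hne (fun p => p j) - r := by
          simp only [hadef, if_pos h]
        constructor
        · have : A.sup' hne (fun q => q j) ≤ p j + r :=
            Finset.sup'_le _ _ fun q hq => by
              have := key q hq p hpA j; linarith
          rw [haj]; linarith
        · have : p j ≤ A.sup' hne (fun q => q j) := Finset.le_sup' (fun q => q j) hpA
          rw [haj]; linarith
      · have haj : a j = A.inf' hne (fun p => p j) := by
          simp only [hadef, if_neg h]
        constructor
        · rw [haj]; exact Finset.inf'_le _ hpA
        · have : p j - r ≤ A.inf' hne (fun q => q j) :=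
            Finset.le_inf' _ _ fun q hq => by
              have := key p hpA q hq j; linarith
          rw [haj]; linarith
    refine ⟨a, hsub, ?_⟩
    apply Set.Subset.antisymm
    · intro x hx
      rw [← hcarve]
      exact ⟨hx.1, hsub hx.2⟩
    · intro p hp
      exact ⟨hA (Finset.mem_coe.1 hp), hAc hp⟩
end

section
/- Let S = {a,b,c,d} ⊆ ℝ² be four points, none lying in the convex hull of the other three, with opposing Radon pairs {a,c} and {b,d}. Then for every λ > 0 and every r ∈ ℝ², at least one of the points b, d, λa + r, λc + r lies in the convex hull of {a, c, λb + r, λd + r}. -/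
/-!
Let `p` be the crossing point of `[a, c]` and `[b, d]`, and work in the frame `p`, `u = c - a`,
`v = d - b`, which spans the plane because the four points are not collinear. The homothety
`x ↦ λ • x + r` sends `p` to some `q = p + α • u + β • v`, and sends `[b, d]` and `[a, c]` to
segments through `q` parallel to `v` and `u`. After the reflections `u ↦ -u` and `v ↦ -v` we
may assume `α, β ≥ 0`. Then either `d` lies below the line from `a` to `λ • d + r`, and so in the
triangle `a c (λ • d + r)`, or it does not, and then `λ • a + r` lies in the triangle
`a (λ • b + r) (λ • d + r)`; both memberships are witnessed by explicit barycentric weights.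
-/

variable {E : Type*} [AddCommGroup E] [Module ℝ E]

theorem smul_add_smul_add_smul_mem_convexHull {x y z : E} {a b c : ℝ} (ha : 0 ≤ a)
    (hb : 0 ≤ b) (hc : 0 ≤ c) (habc : a + b + c = 1) :
    a • x + b • y + c • z ∈ convexHull ℝ ({x, y, z} : Set E) := by
  have h := (convex_convexHull ℝ ({x, y, z} : Set E)).sum_mem (t := Finset.univ)
    (w := ![a, b, c]) (z := ![x, y, z]) (by simp [Fin.forall_fin_succ, ha, hb, hc])
    (by simpa [Fin.sum_univ_three] using habc)
    (fun i _ => subset_convexHull ℝ _ (by fin_cases i <;> simp))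
  simpa [Fin.sum_univ_three] using h

section Crossing

/-! Segments `[p - s • u, p + s' • u]` and `[p - t • v, p + t' • v]` crossing at `p`, and the
image `q = p + α • u + β • v` of `p` under a homothety of ratio `l`. -/

variable (p u v q : E) {s s' t t' l α β : ℝ}

theorem mem_convexHull_of_crossing_of_le (hs : 0 < s) (hs' : 0 < s') (ht' : 0 < t')
    (hl : 0 < l) (hα : 0 ≤ α) (hβ : 0 ≤ β) (hq : q = p + α • u + β • v)
    (h : t' * (s + α) ≤ s * (β + l * t')) :
    p + t' • v ∈ convexHull ℝ {p - s • u, p + s' • u, q + (l * t') • v} := by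
  have hH : 0 < β + l * t' := by positivity
  have hsum : 0 < s + s' := by linarith
  have ht'H : t' ≤ β + l * t' := by nlinarith
  convert smul_add_smul_add_smul_mem_convexHull (x := p - s • u) (y := p + s' • u)
    (z := q + (l * t') • v)
    (a := (s' * (β + l * t' - t') + α * t') / ((s + s') * (β + l * t')))
    (b := (s * (β + l * t') - t' * (s + α)) / ((s + s') * (β + l * t')))
    (c := t' / (β + l * t')) (by apply div_nonneg <;> nlinarith) (by apply div_nonneg <;> nlinarith)
    (by positivity) (by field_simp; ring) using 1
  rw [hq]
  match_scalars <;> field_simp <;> ring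

theorem mem_convexHull_of_crossing_of_lt (hs : 0 < s) (ht : 0 < t) (ht' : 0 < t')
    (hl : 0 < l) (hα : 0 ≤ α) (hβ : 0 ≤ β) (hq : q = p + α • u + β • v)
    (h : s * (β + l * t') < t' * (s + α)) :
    q - (l * s) • u ∈ convexHull ℝ {p - s • u, q - (l * t) • v, q + (l * t') • v} := by
  have hsα : 0 < s + α := by positivity
  have hlt : l * s < s + α := by nlinarith
  convert smul_add_smul_add_smul_mem_convexHull (x := p - s • u) (y := q - (l * t) • v)
    (z := q + (l * t') • v)
    (a := l * s / (s + α))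
    (b := (t' * (s + α) - s * (β + l * t')) / ((s + α) * (t + t')))
    (c := (t * (s + α) - s * (l * t - β)) / ((s + α) * (t + t')))
    (by positivity) (by apply div_nonneg <;> nlinarith) (by apply div_nonneg <;> nlinarith)
    (by field_simp; ring) using 1
  rw [hq]
  match_scalars <;> field_simp <;> ring

theorem mem_convexHull_of_crossing_of_nonneg (hs : 0 < s) (hs' : 0 < s') (ht : 0 < t)
    (ht' : 0 < t') (hl : 0 < l) (hα : 0 ≤ α) (hβ : 0 ≤ β) (hq : q = p + α • u + β • v) :
    p + t' • v ∈ convexHull ℝ {p - s • u, p + s' • u, q - (l * t) • v, q + (l * t') • v} ∨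
    q - (l * s) • u ∈ convexHull ℝ {p - s • u, p + s' • u, q - (l * t) • v, q + (l * t') • v} := by
  rcases le_or_gt (t' * (s + α)) (s * (β + l * t')) with h | h
  · refine .inl (convexHull_mono ?_
      (mem_convexHull_of_crossing_of_le p u v q hs hs' ht' hl hα hβ hq h))
    grind
  · refine .inr (convexHull_mono ?_
      (mem_convexHull_of_crossing_of_lt p u v q hs ht ht' hl hα hβ hq h))
    grind

-- `v ↦ -v` exchanges the roles of `b` and `d`; below, `u ↦ -u` exchanges those of `a` and `c`.
theorem mem_convexHull_of_crossing_of_nonneg_left (hs : 0 < s) (hs' : 0 < s') (ht : 0 < t)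
    (ht' : 0 < t') (hl : 0 < l) (hα : 0 ≤ α) (hq : q = p + α • u + β • v) :
    p - t • v ∈ convexHull ℝ {p - s • u, p + s' • u, q - (l * t) • v, q + (l * t') • v} ∨
    p + t' • v ∈ convexHull ℝ {p - s • u, p + s' • u, q - (l * t) • v, q + (l * t') • v} ∨
    q - (l * s) • u ∈ convexHull ℝ {p - s • u, p + s' • u, q - (l * t) • v, q + (l * t') • v} := by
  rcases le_total 0 β with hβ | hβ
  · have := mem_convexHull_of_crossing_of_nonneg p u v q hs hs' ht ht' hl hα hβ hq
    tauto
  · have := mem_convexHull_of_crossing_of_nonneg p u (-v) q hs hs' ht' ht hl hα (neg_nonneg.2 hβ)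
      (by rw [hq, neg_smul_neg])
    simp only [smul_neg, sub_neg_eq_add, ← sub_eq_add_neg, Set.pair_comm] at this
    tauto

theorem mem_convexHull_of_crossing (hs : 0 < s) (hs' : 0 < s') (ht : 0 < t)
    (ht' : 0 < t') (hl : 0 < l) (hq : q = p + α • u + β • v) :
    p - t • v ∈ convexHull ℝ {p - s • u, p + s' • u, q - (l * t) • v, q + (l * t') • v} ∨
    p + t' • v ∈ convexHull ℝ {p - s • u, p + s' • u, q - (l * t) • v, q + (l * t') • v} ∨
    q - (l * s) • u ∈ convexHull ℝ {p - s • u, p + s' • u, q - (l * t) • v, q + (l * t') • v} ∨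
    q + (l * s') • u ∈ convexHull ℝ {p - s • u, p + s' • u, q - (l * t) • v, q + (l * t') • v} := by
  rcases le_total 0 α with hα | hα
  · have := mem_convexHull_of_crossing_of_nonneg_left p u v q hs hs' ht ht' hl hα hq
    tauto
  · have := mem_convexHull_of_crossing_of_nonneg_left p (-u) v q hs' hs ht ht' hl
      (neg_nonneg.2 hα) (by rw [hq, neg_smul_neg])
    simp only [smul_neg, sub_neg_eq_add, ← sub_eq_add_neg] at this
    rw [Set.insert_comm (p + s' • u)] at this
    tauto

end Crossing

theorem mem_openSegment_of_mem_segment_of_notMem_segment {x y z w p : E}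
    (hxz : p ∈ segment ℝ x z) (hyw : p ∈ segment ℝ y w) (hx : x ∉ segment ℝ y w)
    (hz : z ∉ segment ℝ y w) : p ∈ openSegment ℝ x z :=
  mem_openSegment_of_ne_left_right (by rintro rfl; exact hx hyw) (by rintro rfl; exact hz hyw) hxz

theorem not_collinear_of_notMem_segment {a b c : E} (ha : a ∉ segment ℝ b c)
    (hb : b ∉ segment ℝ a c) (hc : c ∉ segment ℝ a b) : ¬Collinear ℝ {a, b, c} := by
  intro h
  rcases h.wbtw_or_wbtw_or_wbtw with h | h | h
  · exact hb h.mem_segment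
  · exact hc (segment_symm ℝ a b ▸ h.mem_segment)
  · exact ha (segment_symm ℝ b c ▸ h.mem_segment)

theorem linearIndependent_sub_of_mem_segment {a b c d p : E} (hac : p ∈ segment ℝ a c)
    (hbd : p ∈ segment ℝ b d) (habc : ¬Collinear ℝ {a, b, c}) :
    LinearIndependent ℝ ![c - a, d - b] := by
  have hca : c - a ≠ 0 := by
    rintro h
    rw [sub_eq_zero] at h
    subst h
    exact habc (by simpa [Set.pair_comm] using collinear_pair ℝ c b)
  rw [LinearIndependent.pair_iff' hca]
  rintro k hk
  obtain ⟨s', s, -, -, hss, hp⟩ := hac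
  obtain ⟨t', t, -, -, htt, hp'⟩ := hbd
  refine habc ((collinear_iff_of_mem (p₀ := a) (by simp)).2 ⟨c - a, ?_⟩)
  simp only [Set.mem_insert_iff, Set.mem_singleton_iff, forall_eq_or_imp, forall_eq, vadd_eq_add]
  refine ⟨⟨0, by simp⟩, ⟨s - t * k, ?_⟩, ⟨1, by simp⟩⟩
  linear_combination (norm := module) hp' - hp + t • hk - htt • b + hss • a

theorem mem_convexHull_homothety_of_mem_openSegment {a b c d p r : E} {l : ℝ} (hl : 0 < l)
    (hac : p ∈ openSegment ℝ a c) (hbd : p ∈ openSegment ℝ b d)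
    (hspan : l • p + r - p ∈ Submodule.span ℝ {c - a, d - b}) :
    b ∈ convexHull ℝ {a, c, l • b + r, l • d + r} ∨
    d ∈ convexHull ℝ {a, c, l • b + r, l • d + r} ∨
    l • a + r ∈ convexHull ℝ {a, c, l • b + r, l • d + r} ∨
    l • c + r ∈ convexHull ℝ {a, c, l • b + r, l • d + r} := by
  obtain ⟨s', s, hs', hs, hss, hp⟩ := hac
  obtain ⟨t', t, ht', ht, htt, hp'⟩ := hbd
  obtain ⟨α, β, hαβ⟩ := Submodule.mem_span_pair.1 hspan
  have key := mem_convexHull_of_crossing p (c - a) (d - b) (l • p + r) hs hs' ht ht' hl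
    (by linear_combination (norm := module) -hαβ)
  have ea : p - s • (c - a) = a := by linear_combination (norm := module) -hp + hss • a
  have ec : p + s' • (c - a) = c := by linear_combination (norm := module) -hp + hss • c
  have eb : p - t • (d - b) = b := by linear_combination (norm := module) -hp' + htt • b
  have ed : p + t' • (d - b) = d := by linear_combination (norm := module) -hp' + htt • d
  have eb' : l • p + r - (l * t) • (d - b) = l • b + r := by
    linear_combination (norm := module) l • eb
  have ed' : l • p + r + (l * t') • (d - b) = l • d + r := by
    linear_combination (norm := module) l • ed
  have ea' : l • p + r - (l * s) • (c - a) = l • a + r := by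
    linear_combination (norm := module) l • ea
  have ec' : l • p + r + (l * s') • (c - a) = l • c + r := by
    linear_combination (norm := module) l • ec
  rwa [ea, ec, eb, ed, eb', ed', ea', ec'] at key

theorem inseparable_lemma_general (a b c d : ℝ × ℝ)
    (ha : a ∉ convexHull ℝ ({b, c, d} : Set (ℝ × ℝ)))
    (hb : b ∉ convexHull ℝ ({a, c, d} : Set (ℝ × ℝ)))
    (hc : c ∉ convexHull ℝ ({a, b, d} : Set (ℝ × ℝ)))
    (hd : d ∉ convexHull ℝ ({a, b, c} : Set (ℝ × ℝ)))
    (hradon : (segment ℝ a c ∩ segment ℝ b d).Nonempty)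
    (l : ℝ) (hl : 0 < l) (r : ℝ × ℝ) :
    b ∈ convexHull ℝ ({a, c, l • b + r, l • d + r} : Set (ℝ × ℝ)) ∨
    d ∈ convexHull ℝ ({a, c, l • b + r, l • d + r} : Set (ℝ × ℝ)) ∨
    l • a + r ∈ convexHull ℝ ({a, c, l • b + r, l • d + r} : Set (ℝ × ℝ)) ∨
    l • c + r ∈ convexHull ℝ ({a, c, l • b + r, l • d + r} : Set (ℝ × ℝ)) := by
  obtain ⟨p, hac, hbd⟩ := hradon
  have hseg {x y z : ℝ × ℝ} {S : Set (ℝ × ℝ)} (hx : x ∉ convexHull ℝ S) (hy : y ∈ S)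
      (hz : z ∈ S) : x ∉ segment ℝ y z :=
    fun h => hx (segment_subset_convexHull hy hz h)
  have hind : LinearIndependent ℝ ![c - a, d - b] :=
    linearIndependent_sub_of_mem_segment hac hbd <| not_collinear_of_notMem_segment
      (hseg ha (by simp) (by simp)) (hseg hb (by simp) (by simp)) (hseg hc (by simp) (by simp))
  have hspan : Submodule.span ℝ {c - a, d - b} = ⊤ := by
    rw [← Matrix.range_cons_cons_empty _ _ ![]]
    exact hind.span_eq_top_of_card_eq_finrank' (by simp)
  exact mem_convexHull_homothety_of_mem_openSegment hl
    (mem_openSegment_of_mem_segment_of_notMem_segment hac hbd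
      (hseg ha (by simp) (by simp)) (hseg hc (by simp) (by simp)))
    (mem_openSegment_of_mem_segment_of_notMem_segment hbd hac
      (hseg hb (by simp) (by simp)) (hseg hd (by simp) (by simp)))
    (hspan ▸ Submodule.mem_top)

/-- Let `a, b, c, d ∈ ℝ²` be four (distinct) points, none in the convex hull of the other
three, whose opposing Radon pairs are `{a,c}` and `{b,d}` (the segments `[a,c]` and `[b,d]`
meet).  Then for every `λ > 0` and `r ∈ ℝ²`, one of `b`, `d`, `λ•a + r`, `λ•c + r` lies in
the convex hull of `{a, c, λ•b + r, λ•d + r}`. -/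
theorem inseparable_lemma (a b c d : ℝ × ℝ)
    (hab : a ≠ b) (hac : a ≠ c) (had : a ≠ d) (hbc : b ≠ c) (hbd : b ≠ d) (hcd : c ≠ d)
    (ha : a ∉ convexHull ℝ ({b, c, d} : Set (ℝ × ℝ)))
    (hb : b ∉ convexHull ℝ ({a, c, d} : Set (ℝ × ℝ)))
    (hc : c ∉ convexHull ℝ ({a, b, d} : Set (ℝ × ℝ)))
    (hd : d ∉ convexHull ℝ ({a, b, c} : Set (ℝ × ℝ)))
    (hradon : (segment ℝ a c ∩ segment ℝ b d).Nonempty)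
    (l : ℝ) (hl : 0 < l) (r : ℝ × ℝ) :
    b ∈ convexHull ℝ ({a, c, l • b + r, l • d + r} : Set (ℝ × ℝ)) ∨
    d ∈ convexHull ℝ ({a, c, l • b + r, l • d + r} : Set (ℝ × ℝ)) ∨
    l • a + r ∈ convexHull ℝ ({a, c, l • b + r, l • d + r} : Set (ℝ × ℝ)) ∨
    l • c + r ∈ convexHull ℝ ({a, c, l • b + r, l • d + r} : Set (ℝ × ℝ)) :=
  inseparable_lemma_general a b c d ha hb hc hd hradon l hl r
end

section
/- Let C ⊆ ℝ² be convex and let 𝒞 = {λC + r : λ > 0, r ∈ ℝ²} be the convex family generated by C. Then no set of four points in ℝ² is shattered by 𝒞; hence the VC dimension of 𝒞 is at most 3. -/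
/-- The convex family generated by a set `C`: all positive scalings of `C` followed by
translations. -/
def ConvexFamily (C : Set (ℝ × ℝ)) : Set (Set (ℝ × ℝ)) :=
  {D | ∃ l : ℝ, 0 < l ∧ ∃ r : ℝ × ℝ, D = (fun v => l • v + r) '' C}

/-!
Four points in the plane admit a Radon partition `A ⊔ B` with `conv A ∩ conv B ≠ ∅`. If one part
is a single point `p`, any convex set containing the other part contains `p`, so that part cannot
be carved out. The remaining case is two crossing segments `[a, b]` and `[c, d]`, and here one
needs that the family consists of homothets: if `D₁` is the smaller homothet, then `D₂` is the
preimage of `D₁` under a contraction `v ↦ ρ • v + w` with `0 < ρ ≤ 1`. Writing the displacement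
`ρ • x + w - x` of the crossing point `x` in the basis `a - b, c - d`, an explicit convex
combination puts one of `a, b` into `D₂` or one of `c, d` into `D₁`, so `{a, b}` and `{c, d}`
cannot both be carved out. If `a - b` and `c - d` are parallel, all four points lie on a line
through `x`, and comparing distances from `x` gives the same conclusion.
-/

section Homothety

variable {V : Type*} [AddCommGroup V] [Module ℝ V]

theorem Convex.mem_of_smul_eq_add_add {K : Set V} (hK : Convex ℝ K) {x y z v : V}
    (hx : x ∈ K) (hy : y ∈ K) (hz : z ∈ K) {p q r N : ℝ} (hp : 0 ≤ p) (hq : 0 ≤ q) (hr : 0 ≤ r)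
    (hN : p + q + r = N) (hN0 : 0 < N) (hv : N • v = p • x + q • y + r • z) : v ∈ K := by
  have hsum : ∑ i, ![p, q, r] i = N := by simpa [Fin.sum_univ_three] using hN
  have hv' : v = N⁻¹ • (p • x + q • y + r • z) := by rw [← hv, inv_smul_smul₀ hN0.ne']
  have := hK.centerMass_mem (t := Finset.univ) (w := ![p, q, r]) (z := ![x, y, z])
    (by simp [Fin.forall_fin_succ, hp, hq, hr]) (hsum ▸ hN0)
    (by simp [Fin.forall_fin_succ, hx, hy, hz])
  simpa [Finset.centerMass, hsum, Fin.sum_univ_three, hv'] using this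

theorem Convex.preimage_smul_add {K : Set V} (hK : Convex ℝ K) (ρ : ℝ) (w : V) :
    Convex ℝ ((fun v => ρ • v + w) ⁻¹' K) := by
  intro p hp q hq s t hs ht hst
  show ρ • (s • p + t • q) + w ∈ K
  convert hK hp hq hs ht hst using 1
  linear_combination (norm := module) -(hst • w)

theorem Convex.smul_add_mem_or_smul_add_mem {K₁ K₂ : Set V} (h₁ : Convex ℝ K₁)
    (h₂ : Convex ℝ K₂) {x u : V} {σ τ : ℝ} (hσ : 0 ≤ σ) (hτ : 0 ≤ τ) (hx₁ : x ∈ K₁)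
    (hx₂ : x ∈ K₂) (hσ₁ : σ • u + x ∈ K₁) (hτ₂ : τ • u + x ∈ K₂) :
    τ • u + x ∈ K₁ ∨ σ • u + x ∈ K₂ := by
  rcases wbtw_or_wbtw_smul_vadd_of_nonneg x u hσ hτ with h | h
  · exact .inr (h₂.segment_subset hx₂ hτ₂ h.mem_segment)
  · exact .inl (h₁.segment_subset hx₁ hσ₁ h.mem_segment)

theorem Convex.mem_or_mem_of_sub_eq_smul_sub {K₁ K₂ : Set V} (h₁ : Convex ℝ K₁)
    (h₂ : Convex ℝ K₂) {a b c d x : V} {k : ℝ} (hk : c - d = k • (a - b))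
    (hxab : x ∈ openSegment ℝ a b) (hxcd : x ∈ openSegment ℝ c d)
    (ha : a ∈ K₁) (hb : b ∈ K₁) (hc : c ∈ K₂) (hd : d ∈ K₂) :
    a ∈ K₂ ∨ c ∈ K₁ ∨ d ∈ K₁ := by
  have hx₁ := h₁.openSegment_subset ha hb hxab
  have hx₂ := h₂.openSegment_subset hc hd hxcd
  obtain ⟨α, β, -, hβ, hαβ, hxa⟩ := hxab
  obtain ⟨γ, δ, hγ, hδ, hγδ, hxc⟩ := hxcd
  obtain rfl : α = 1 - β := by linarith
  obtain rfl : γ = 1 - δ := by linarith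
  have ha' : a = β • (a - b) + x := by rw [← hxa]; module
  have hc' : c = (δ * k) • (a - b) + x := by rw [← hxc, mul_smul, ← hk]; module
  have hd' : d = ((δ - 1) * k) • (a - b) + x := by rw [← hxc, mul_smul, ← hk]; module
  rw [ha'] at ha
  rcases le_total 0 k with hk0 | hk0
  · rw [hc'] at hc
    rcases h₁.smul_add_mem_or_smul_add_mem h₂ hβ.le (mul_nonneg hδ.le hk0) hx₁ hx₂ ha hc
      with h | h
    · exact .inr (.inl (hc' ▸ h))
    · exact .inl (ha' ▸ h)
  · rw [hd'] at hd
    rcases h₁.smul_add_mem_or_smul_add_mem h₂ hβ.le (by nlinarith) hx₁ hx₂ ha hd with h | h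
    · exact .inr (.inr (hd' ▸ h))
    · exact .inl (ha' ▸ h)

/-- Either `ρ • b + w` lies in the triangle `b, ρ • c + w, ρ • d + w`, or `c` lies in the triangle
`a, b, ρ • c + w`; both memberships are witnessed by explicit weights. -/
theorem Convex.smul_add_mem_or_mem_of_nonneg {K : Set V} (hK : Convex ℝ K) {a b c d x w : V}
    {ρ lam mu : ℝ} (hρ0 : 0 < ρ) (hρ1 : ρ ≤ 1) (hlam : 0 ≤ lam) (hmu : 0 ≤ mu)
    (hxab : x ∈ openSegment ℝ a b) (hxcd : x ∈ openSegment ℝ c d)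
    (hw : ρ • x + w = x + lam • (a - b) + mu • (c - d))
    (ha : a ∈ K) (hb : b ∈ K) (hc : ρ • c + w ∈ K) (hd : ρ • d + w ∈ K) :
    ρ • b + w ∈ K ∨ c ∈ K := by
  obtain ⟨α, β, hα, hβ, hαβ, rfl⟩ := hxab
  obtain ⟨γ, δ, hγ, hδ, hγδ, hx⟩ := hxcd
  obtain rfl : β = 1 - α := by linarith
  obtain rfl : γ = 1 - δ := by linarith
  have hN : 0 ≤ lam + α * (1 - ρ) := add_nonneg hlam (mul_nonneg hα.le (sub_nonneg.2 hρ1))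
  rcases le_or_gt (α * mu) (δ * (lam + α * (1 - ρ))) with h | h
  · left
    refine hK.mem_of_smul_eq_add_add hb hc hd (p := ρ * α)
      (q := α * mu + (1 - δ) * (lam + α * (1 - ρ))) (N := lam + α) (by positivity)
      (add_nonneg (by positivity) (mul_nonneg hγ.le hN)) (sub_nonneg.2 h) (by ring)
      (by positivity) ?_
    linear_combination (norm := module) (ρ * α) • hw - (ρ * (lam + α * (1 - ρ))) • hx
  · right
    refine hK.mem_of_smul_eq_add_add ha hb hc (q := (1 - α) * (mu - δ * (1 - ρ)) + lam * δ)
      (N := mu + ρ * δ) (sub_nonneg.2 h.le) (by nlinarith) hδ.le (by ring) (by positivity) ?_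
    linear_combination (norm := module) (-δ) • hw + mu • hx

theorem Convex.smul_add_mem_or_mem_of_openSegment {K : Set V} (hK : Convex ℝ K)
    {a b c d x w : V} {ρ lam mu : ℝ} (hρ0 : 0 < ρ) (hρ1 : ρ ≤ 1)
    (hxab : x ∈ openSegment ℝ a b) (hxcd : x ∈ openSegment ℝ c d)
    (hw : ρ • x + w = x + lam • (a - b) + mu • (c - d))
    (ha : a ∈ K) (hb : b ∈ K) (hc : ρ • c + w ∈ K) (hd : ρ • d + w ∈ K) :
    ρ • a + w ∈ K ∨ ρ • b + w ∈ K ∨ c ∈ K ∨ d ∈ K := by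
  have hxba := openSegment_symm ℝ a b ▸ hxab
  have hxdc := openSegment_symm ℝ c d ▸ hxcd
  rcases le_total 0 lam with hlam | hlam <;> rcases le_total 0 mu with hmu | hmu
  · have := hK.smul_add_mem_or_mem_of_nonneg hρ0 hρ1 hlam hmu hxab hxcd hw ha hb hc hd
    tauto
  · have := hK.smul_add_mem_or_mem_of_nonneg hρ0 hρ1 hlam (neg_nonneg.2 hmu) hxab hxdc
      (by rw [hw]; module) ha hb hd hc
    tauto
  · have := hK.smul_add_mem_or_mem_of_nonneg hρ0 hρ1 (neg_nonneg.2 hlam) hmu hxba hxcd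
      (by rw [hw]; module) hb ha hc hd
    tauto
  · have := hK.smul_add_mem_or_mem_of_nonneg hρ0 hρ1 (neg_nonneg.2 hlam) (neg_nonneg.2 hmu)
      hxba hxdc (by rw [hw]; module) hb ha hd hc
    tauto

theorem exists_eq_smul_or_eq_smul_add_smul (hV : Module.finrank ℝ V = 2) {u : V} (hu : u ≠ 0)
    (v w : V) : (∃ k : ℝ, v = k • u) ∨ ∃ lam mu : ℝ, w = lam • u + mu • v := by
  by_cases hli : LinearIndependent ℝ ![v, u]
  · right
    have hspan := hli.span_eq_top_of_card_eq_finrank (by simp [hV])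
    have hw : w ∈ Submodule.span ℝ {v, u} := by
      rw [← Matrix.range_cons_cons_empty v u ![], hspan]; trivial
    obtain ⟨mu, lam, h⟩ := Submodule.mem_span_pair.1 hw
    exact ⟨lam, mu, by rw [← h, add_comm]⟩
  · left
    simp only [linearIndependent_fin2, Matrix.cons_val_one, Matrix.cons_val_zero] at hli
    push Not at hli
    obtain ⟨k, hk⟩ := hli hu
    exact ⟨k, hk.symm⟩

theorem Convex.smul_add_mem_or_mem_of_segment (hV : Module.finrank ℝ V = 2) {K : Set V}
    (hK : Convex ℝ K) {a b c d x w : V} {ρ : ℝ} (hρ0 : 0 < ρ) (hρ1 : ρ ≤ 1)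
    (hxab : x ∈ segment ℝ a b) (hxcd : x ∈ segment ℝ c d)
    (ha : a ∈ K) (hb : b ∈ K) (hc : ρ • c + w ∈ K) (hd : ρ • d + w ∈ K) :
    ρ • a + w ∈ K ∨ ρ • b + w ∈ K ∨ c ∈ K ∨ d ∈ K := by
  by_contra! ⟨ha₂, hb₂, hc₁, hd₁⟩
  have hK₂ := hK.preimage_smul_add ρ w
  have hx₁ : x ∈ K := hK.segment_subset ha hb hxab
  have hx₂ : ρ • x + w ∈ K := hK₂.segment_subset hc hd hxcd
  have hxab' : x ∈ openSegment ℝ a b :=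
    mem_openSegment_of_ne_left_right (by rintro rfl; exact ha₂ hx₂)
      (by rintro rfl; exact hb₂ hx₂) hxab
  have hxcd' : x ∈ openSegment ℝ c d :=
    mem_openSegment_of_ne_left_right (by rintro rfl; exact hc₁ hx₁)
      (by rintro rfl; exact hd₁ hx₁) hxcd
  have hab : a - b ≠ 0 := by
    rintro h
    rw [sub_eq_zero.1 h, openSegment_same, Set.mem_singleton_iff] at hxab'
    exact hb₂ (hxab' ▸ hx₂)
  rcases exists_eq_smul_or_eq_smul_add_smul hV hab (c - d) (ρ • x + w - x)
    with ⟨k, hk⟩ | ⟨lam, mu, hw⟩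
  · have := hK.mem_or_mem_of_sub_eq_smul_sub hK₂ hk hxab' hxcd' ha hb hc hd
    tauto
  · have := hK.smul_add_mem_or_mem_of_openSegment hρ0 hρ1 hxab' hxcd'
      (lam := lam) (mu := mu) (by rw [add_assoc, ← hw, add_sub_cancel]) ha hb hc hd
    tauto

theorem mem_image_smul_add_iff {C : Set V} {l : ℝ} (hl : 0 < l) (r v : V) :
    v ∈ (fun v => l • v + r) '' C ↔ l⁻¹ • (v - r) ∈ C := by
  constructor
  · rintro ⟨v, hv, rfl⟩
    simpa [smul_smul, inv_mul_cancel₀ hl.ne'] using hv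
  · intro h
    exact ⟨l⁻¹ • (v - r), h, by simp [smul_smul, mul_inv_cancel₀ hl.ne']⟩

theorem mem_image_smul_add_iff_smul_add_mem_image {C : Set V} {l₁ l₂ : ℝ} (hl₁ : 0 < l₁)
    (hl₂ : 0 < l₂) (r₁ r₂ v : V) :
    v ∈ (fun v => l₂ • v + r₂) '' C ↔
      (l₁ / l₂) • v + (r₁ - (l₁ / l₂) • r₂) ∈ (fun v => l₁ • v + r₁) '' C := by
  rw [mem_image_smul_add_iff hl₂, mem_image_smul_add_iff hl₁,
    show (l₁ / l₂) • v + (r₁ - (l₁ / l₂) • r₂) - r₁ = (l₁ / l₂) • (v - r₂) by module,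
    smul_smul, div_eq_mul_inv, inv_mul_cancel_left₀ hl₁.ne']

end Homothety

theorem convex_of_mem_convexFamily {C D : Set (ℝ × ℝ)} (hC : Convex ℝ C)
    (hD : D ∈ ConvexFamily C) : Convex ℝ D := by
  obtain ⟨l, -, r, rfl⟩ := hD
  simpa only [add_comm] using hC.affinity r l

theorem disjoint_segment_of_mem_convexFamily {C D₁ D₂ : Set (ℝ × ℝ)} (hC : Convex ℝ C)
    (hD₁ : D₁ ∈ ConvexFamily C) (hD₂ : D₂ ∈ ConvexFamily C) {a b c d : ℝ × ℝ}
    (hab : ({a, b} : Set (ℝ × ℝ)) ⊆ D₁ \ D₂) (hcd : ({c, d} : Set (ℝ × ℝ)) ⊆ D₂ \ D₁) :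
    Disjoint (segment ℝ a b) (segment ℝ c d) := by
  obtain ⟨l₁, hl₁, r₁, rfl⟩ := hD₁
  obtain ⟨l₂, hl₂, r₂, rfl⟩ := hD₂
  wlog hl : l₁ ≤ l₂ generalizing l₁ l₂ r₁ r₂ a b c d
  · exact (this l₂ hl₂ r₂ l₁ hl₁ r₁ hcd hab (le_of_not_ge hl)).symm
  simp only [Set.insert_subset_iff, Set.singleton_subset_iff, Set.mem_sdiff,
    mem_image_smul_add_iff_smul_add_mem_image hl₁ hl₂ r₁ r₂] at hab hcd
  rw [Set.disjoint_left]
  intro x hxab hxcd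
  rcases (convex_of_mem_convexFamily hC ⟨l₁, hl₁, r₁, rfl⟩).smul_add_mem_or_mem_of_segment
    (by simp) (div_pos hl₁ hl₂) (div_le_one_of_le₀ hl hl₂.le) hxab hxcd hab.1.1 hab.2.1
    hcd.1.1 hcd.2.1 with h | h | h | h
  exacts [hab.1.2 h, hab.2.2 h, hcd.1.2 h, hcd.2.2 h]

theorem Shatters.subset {Ω : Type*} {𝒞 : Set (Set Ω)} {S T : Finset Ω} (h : Shatters 𝒞 S)
    (hTS : T ⊆ S) : Shatters 𝒞 T := by
  intro A hAT
  obtain ⟨D, hD, hSD⟩ := h A (hAT.trans hTS)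
  refine ⟨D, hD, ?_⟩
  rw [← Set.inter_eq_left.2 (Finset.coe_subset.2 hTS), Set.inter_assoc, hSD,
    Set.inter_eq_right.2 (Finset.coe_subset.2 hAT)]

theorem Shatters.exists_subset_sdiff {Ω : Type*} [DecidableEq Ω] {𝒞 : Set (Set Ω)}
    {S A : Finset Ω} (h : Shatters 𝒞 S) (hAS : A ⊆ S) :
    ∃ D₁ ∈ 𝒞, ∃ D₂ ∈ 𝒞, (A : Set Ω) ⊆ D₁ \ D₂ ∧ ((S \ A : Finset Ω) : Set Ω) ⊆ D₂ \ D₁ := by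
  obtain ⟨D₁, hD₁, hSD₁⟩ := h A hAS
  obtain ⟨D₂, hD₂, hSD₂⟩ := h (S \ A) Finset.sdiff_subset
  simp only [Set.ext_iff, Set.mem_inter_iff, Finset.mem_coe, Finset.mem_sdiff] at hSD₁ hSD₂
  exact ⟨D₁, hD₁, D₂, hD₂, fun p hp => by grind, fun p hp => by grind⟩

theorem Finset.exists_convexHull_inter_convexHull_sdiff_nonempty {E : Type*} [AddCommGroup E]
    [Module ℝ E] [FiniteDimensional ℝ E] [DecidableEq E] {S : Finset E}
    (hS : S.card = Module.finrank ℝ E + 2) :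
    ∃ A ⊆ S, (convexHull ℝ (A : Set E) ∩ convexHull ℝ ↑(S \ A)).Nonempty := by
  classical
  have hdep : ¬ AffineIndependent ℝ ((↑) : S → E) := by
    rw [← finrank_vectorSpan_le_iff_not_affineIndependent (n := Module.finrank ℝ E) ℝ _
      (by simpa using hS)]
    exact Submodule.finrank_le _
  obtain ⟨I, hI⟩ := Convex.radon_partition hdep
  refine ⟨S.filter (· ∈ ((↑) '' I : Set E)), Finset.filter_subset _ _, ?_⟩
  convert hI using 3
  · ext p; simp
  · ext p
    simpa using ⟨fun h => ⟨h.1, h.2 h.1⟩, fun ⟨h, h'⟩ => ⟨h, fun _ => h'⟩⟩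

theorem one_lt_card_of_mem_convexHull {E : Type*} [AddCommGroup E] [Module ℝ E] {A : Finset E}
    {D : Set E} {x : E} (hxA : x ∈ convexHull ℝ (A : Set E)) (hxD : x ∈ D)
    (hAD : Disjoint (A : Set E) D) : 1 < A.card := by
  have hA : A.Nonempty := Finset.coe_nonempty.1 (convexHull_nonempty_iff.1 ⟨x, hxA⟩)
  obtain ⟨p, rfl⟩ | hA := hA.exists_eq_singleton_or_nontrivial
  · rw [Finset.coe_singleton, convexHull_singleton, Set.mem_singleton_iff] at hxA
    exact (Set.disjoint_left.1 hAD (by simp) (hxA ▸ hxD)).elim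
  · exact Finset.one_lt_card_iff_nontrivial.2 hA

theorem not_shatters_convexFamily_of_card_eq_four {C : Set (ℝ × ℝ)} (hC : Convex ℝ C)
    {S : Finset (ℝ × ℝ)} (hS : S.card = 4) : ¬ Shatters (ConvexFamily C) S := by
  intro hsh
  obtain ⟨A, hAS, x, hxA, hxB⟩ := S.exists_convexHull_inter_convexHull_sdiff_nonempty
    (by simpa using hS)
  obtain ⟨D₁, hD₁, D₂, hD₂, hA, hB⟩ := hsh.exists_subset_sdiff hAS
  have hx₁ := convexHull_min (hA.trans Set.sdiff_subset) (convex_of_mem_convexFamily hC hD₁) hxA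
  have hx₂ := convexHull_min (hB.trans Set.sdiff_subset) (convex_of_mem_convexFamily hC hD₂) hxB
  have hA₂ := one_lt_card_of_mem_convexHull hxA hx₂ (Set.subset_sdiff.1 hA).2
  have hB₂ := one_lt_card_of_mem_convexHull hxB hx₁ (Set.subset_sdiff.1 hB).2
  have hcard := Finset.card_sdiff_add_card_eq_card hAS
  obtain ⟨a, b, -, rfl⟩ := Finset.card_eq_two.1 (show A.card = 2 by omega)
  obtain ⟨c, d, -, hcd⟩ := Finset.card_eq_two.1 (show (S \ {a, b}).card = 2 by omega)
  rw [hcd, Finset.coe_pair] at hxB hB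
  rw [Finset.coe_pair] at hxA hA
  rw [convexHull_pair] at hxA hxB
  exact Set.disjoint_left.1 (disjoint_segment_of_mem_convexFamily hC hD₁ hD₂ hA hB) hxA hxB

/-- For any convex `C ⊆ ℝ²`, no four-point set is shattered by the convex family generated
by `C`; hence the VC dimension of this family is at most 3. -/
theorem no_four_points_shattered_by_convex_family (C : Set (ℝ × ℝ)) (hC : Convex ℝ C) :
    (∀ S : Finset (ℝ × ℝ), S.card = 4 → ¬ Shatters (ConvexFamily C) S) ∧
    (∀ S : Finset (ℝ × ℝ), Shatters (ConvexFamily C) S → S.card ≤ 3) := by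
  refine ⟨fun S hS => not_shatters_convexFamily_of_card_eq_four hC hS, fun S hsh => ?_⟩
  by_contra! h
  obtain ⟨T, hTS, hT⟩ := Finset.exists_subset_card_eq (show 4 ≤ S.card by omega)
  exact not_shatters_convexFamily_of_card_eq_four hC hT (hsh.subset hTS)
end

section
/- The VC dimension of the collection of closed balls of any norm on ℝ² is at most 3. -/
open Module

namespace Shatters

variable {Ω : Type*} {C : Set (Set Ω)} {S T : Finset Ω}

theorem subset_s12 (hS : Shatters C S) (hTS : T ⊆ S) : Shatters C T := fun A hAT => by
  obtain ⟨c, hc, hSc⟩ := hS A (hAT.trans hTS)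
  refine ⟨c, hc, Set.Subset.antisymm (fun x hx => ?_) fun x hx => ⟨hAT hx, ?_⟩⟩
  · rw [← hSc]; exact ⟨hTS hx.1, hx.2⟩
  · rw [← hSc] at hx; exact hx.2

theorem mono {D : Set (Set Ω)} (hS : Shatters C S) (hCD : C ⊆ D) : Shatters D S := fun A hA => by
  obtain ⟨c, hc, hSc⟩ := hS A hA
  exact ⟨c, hCD hc, hSc⟩

theorem exists_subset_sdiff_s12 [DecidableEq Ω] (hT : Shatters C T) {U : Finset Ω} (hUT : U ⊆ T) :
    ∃ c₁ ∈ C, ∃ c₂ ∈ C, (U : Set Ω) ⊆ c₁ \ c₂ ∧ ((T \ U : Finset Ω) : Set Ω) ⊆ c₂ \ c₁ := by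
  obtain ⟨c₁, hc₁, hTc₁⟩ := hT U hUT
  obtain ⟨c₂, hc₂, hTc₂⟩ := hT (T \ U) Finset.sdiff_subset
  have mem₁ : ∀ x ∈ T, x ∈ c₁ ↔ x ∈ U := fun x hx => by simpa [hx] using Set.ext_iff.1 hTc₁ x
  have mem₂ : ∀ x ∈ T, x ∈ c₂ ↔ x ∉ U := fun x hx => by simpa [hx] using Set.ext_iff.1 hTc₂ x
  refine ⟨c₁, hc₁, c₂, hc₂, fun x hx => ?_, fun x hx => ?_⟩
  · have hxT : x ∈ T := hUT hx
    exact ⟨(mem₁ x hxT).2 hx, fun h => (mem₂ x hxT).1 h hx⟩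
  · obtain ⟨hxT, hxU⟩ := Finset.mem_sdiff.1 hx
    exact ⟨(mem₂ x hxT).2 hxU, fun h => hxU ((mem₁ x hxT).1 h)⟩

end Shatters

theorem Finset.exists_subset_convexHull_inter_nonempty {E : Type*} [AddCommGroup E]
    [Module ℝ E] [FiniteDimensional ℝ E] [DecidableEq E] {T : Finset E}
    (hT : finrank ℝ E + 2 ≤ T.card) :
    ∃ U ⊆ T, (convexHull ℝ (U : Set E) ∩ convexHull ℝ ↑(T \ U)).Nonempty := by
  classical
  have hdep : ¬AffineIndependent ℝ ((↑) : T → E) := fun hind => by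
    have := hind.card_le_finrank_succ
    have := Submodule.finrank_le (vectorSpan ℝ (Set.range ((↑) : T → E)))
    simp only [Fintype.card_coe] at *
    omega
  obtain ⟨I, hI⟩ := Convex.radon_partition hdep
  refine ⟨T.filter fun x => ∃ h : x ∈ T, ⟨x, h⟩ ∈ I, filter_subset _ _, ?_⟩
  convert hI using 3 <;> ext x <;>
    simp only [coe_filter, coe_sdiff, Set.mem_image, Set.mem_compl_iff] <;> grind

namespace Seminorm

variable {E : Type*} [AddCommGroup E] [Module ℝ E]

theorem exists_dual_vector (p : Seminorm ℝ E) (x : E) :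
    ∃ f : Dual ℝ E, (∀ y, f y ≤ p y) ∧ f x = p x := by
  have hx : ∀ c : ℝ, c • x = 0 → (RingHom.id ℝ) c • p x = 0 := fun c hc => by
    simpa [map_smul_eq_mul, Real.norm_eq_abs] using congrArg p hc
  have hle : ∀ y : (LinearPMap.mkSpanSingleton' x (p x) hx).domain,
      LinearPMap.mkSpanSingleton' x (p x) hx y ≤ p y := by
    rintro ⟨y, hy⟩
    obtain ⟨c, rfl⟩ := Submodule.mem_span_singleton.1 hy
    rw [LinearPMap.mkSpanSingleton'_apply, map_smul_eq_mul, Real.norm_eq_abs, smul_eq_mul,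
      RingHom.id_apply]
    exact mul_le_mul_of_nonneg_right (le_abs_self c) (apply_nonneg p x)
  obtain ⟨f, hfx, hfp⟩ := exists_extension_of_le_sublinear _ p
    (fun c hc y => by rw [map_smul_eq_mul, Real.norm_eq_abs, abs_of_pos hc])
    (map_add_le_add p) hle
  exact ⟨f, hfp, (hfx ⟨x, Submodule.mem_span_singleton_self x⟩).trans
    (LinearPMap.mkSpanSingleton'_apply_self _ _ _ _)⟩

variable {p : Seminorm ℝ E} {f : Dual ℝ E} {x y r₁ r₂ : E} {l₁ l₂ : ℝ}

theorem apply_lt_of_notMem_closedBall (hf : ∀ y, f y ≤ p y) (hfx : f (x - r₂) = p (x - r₂))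
    (hx : x ∉ p.closedBall r₂ l₂) (hy : y ∈ p.closedBall r₂ l₂) : f y < f x := by
  rw [mem_closedBall, not_le] at hx
  rw [mem_closedBall] at hy
  have := hf (y - r₂)
  rw [map_sub] at this hfx
  linarith

theorem sub_lt_apply_sub (hf : ∀ y, f y ≤ p y) (hfx : f (x - r₂) = p (x - r₂))
    (hx₁ : x ∈ p.closedBall r₁ l₁) (hx₂ : x ∉ p.closedBall r₂ l₂) : l₂ - l₁ < f (r₁ - r₂) := by
  rw [mem_closedBall] at hx₁
  rw [mem_closedBall, not_le] at hx₂
  have := hf (x - r₁)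
  rw [map_sub] at this hfx ⊢
  linarith

theorem le_add_of_smul_add_smul_eq {g h : Dual ℝ E} {z : E} {s t r : ℝ}
    (hf : ∀ y, f y ≤ p y) (hg : ∀ y, g y ≤ p y) (hhz : h z = p z) (hz : 0 < p z)
    (hs : 0 ≤ s) (ht : 0 ≤ t) (hfgh : s • f + t • g = r • h) : r ≤ s + t := by
  have hval : s * f z + t * g z = r * p z := by
    simpa [hhz] using LinearMap.congr_fun hfgh z
  nlinarith [mul_le_mul_of_nonneg_left (hf z) hs, mul_le_mul_of_nonneg_left (hg z) ht]

end Seminorm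

/-- Read `A, B, C` as the images under `(f_a, f_c)` of three consecutive vertices of a
quadrilateral whose diagonal `AC` passes through the origin, and `(s, t)` as the coordinates of
`f_b` in the basis `(f_a, f_c)`. Then `B - A` lies in the second quadrant, `B - C` in the fourth,
and the angle from `B - C` to `B - A` is less than `π`, so `(s, t)`, having positive product with
both, lies in the closed first quadrant. -/
theorem nonneg_of_quad_vertex {A₁ A₂ B₁ B₂ C₁ C₂ α β s t : ℝ} (hα : 0 < α) (hβ : 0 < β)
    (hAC₁ : α * A₁ + β * C₁ = 0) (hAC₂ : α * A₂ + β * C₂ = 0) (hA : 0 < A₁) (hC : 0 < C₂)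
    (hBA : B₁ < A₁) (hBC : B₂ < C₂) (hAB : 0 ≤ A₁ * B₂ - A₂ * B₁)
    (hwA : s * A₁ + t * A₂ < s * B₁ + t * B₂) (hwC : s * C₁ + t * C₂ < s * B₁ + t * B₂) :
    0 ≤ s ∧ 0 ≤ t := by
  have hA₂ : A₂ < 0 := by nlinarith
  have hC₁ : C₁ < 0 := by nlinarith
  have hCA : C₁ * A₂ - C₂ * A₁ = 0 := by nlinarith
  have hBC' : 0 ≤ B₁ * C₂ - B₂ * C₁ := by nlinarith
  have hB₂ : A₂ < B₂ := by nlinarith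
  have hB₁ : C₁ < B₁ := by nlinarith
  have hs : 0 ≤ s := by
    by_contra! hs
    have ht : t < 0 := by nlinarith
    nlinarith [mul_pos (neg_pos.2 hs) (neg_pos.2 ht)]
  exact ⟨hs, by nlinarith⟩

theorem nonneg_or_nonneg_of_quad {A₁ A₂ B₁ B₂ C₁ C₂ D₁ D₂ α β γ δ s t s' t' : ℝ}
    (hα : 0 ≤ α) (hβ : 0 ≤ β) (hαβ : α + β = 1)
    (hAC₁ : α * A₁ + β * C₁ = 0) (hAC₂ : α * A₂ + β * C₂ = 0)
    (hγ : 0 ≤ γ) (hδ : 0 ≤ δ) (hγδ : γ + δ = 1)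
    (hBD₁ : γ * B₁ + δ * D₁ = 0) (hBD₂ : γ * B₂ + δ * D₂ = 0) (hA : 0 < A₁) (hC : 0 < C₂)
    (hBA : B₁ < A₁) (hDA : D₁ < A₁) (hBC : B₂ < C₂) (hDC : D₂ < C₂)
    (hwA : s * A₁ + t * A₂ < s * B₁ + t * B₂) (hwC : s * C₁ + t * C₂ < s * B₁ + t * B₂)
    (hw'A : s' * A₁ + t' * A₂ < s' * D₁ + t' * D₂)
    (hw'C : s' * C₁ + t' * C₂ < s' * D₁ + t' * D₂) :
    (0 ≤ s ∧ 0 ≤ t) ∨ (0 ≤ s' ∧ 0 ≤ t') := by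
  have hα' : 0 < α := hα.lt_of_ne (by rintro rfl; nlinarith)
  have hβ' : 0 < β := hβ.lt_of_ne (by rintro rfl; nlinarith)
  rcases le_or_gt 0 (A₁ * B₂ - A₂ * B₁) with hAB | hAB
  · exact .inl (nonneg_of_quad_vertex hα' hβ' hAC₁ hAC₂ hA hC hBA hBC hAB hwA hwC)
  · have hδ' : 0 < δ := hδ.lt_of_ne <| by
      rintro rfl
      obtain rfl : γ = 1 := by linarith
      simp only [one_mul, zero_mul, add_zero] at hBD₁ hBD₂
      simp [hBD₁, hBD₂] at hAB
    have hAD : δ * (A₁ * D₂ - A₂ * D₁) = -γ * (A₁ * B₂ - A₂ * B₁) := by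
      linear_combination A₁ * hBD₂ - A₂ * hBD₁
    have hAD' : 0 ≤ A₁ * D₂ - A₂ * D₁ := by nlinarith
    exact .inr (nonneg_of_quad_vertex hα' hβ' hAC₁ hAC₂ hA hC hDA hDC hAD' hw'A hw'C)

namespace Module.Dual

variable {E : Type*} [AddCommGroup E] [Module ℝ E] {fa fb fc fd : Dual ℝ E} {a b c d q : E}

theorem apply_lt_of_mem_segment {f : Dual ℝ E} (hq : q ∈ segment ℝ b d) (hb : f b < f a)
    (hd : f d < f a) : f q < f a :=
  (convex_halfSpace_lt f.isLinear (f a)).segment_subset hb hd hq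

theorem nonneg_or_nonneg_of_mem_segment {s t s' t' : ℝ}
    (hq_ac : q ∈ segment ℝ a c) (hq_bd : q ∈ segment ℝ b d)
    (hfb : fb = s • fa + t • fc) (hfd : fd = s' • fa + t' • fc)
    (hab : fa b < fa a) (had : fa d < fa a) (hcb : fc b < fc c) (hcd : fc d < fc c)
    (hba : fb a < fb b) (hbc : fb c < fb b) (hda : fd a < fd d) (hdc : fd c < fd d) :
    (0 ≤ s ∧ 0 ≤ t) ∨ (0 ≤ s' ∧ 0 ≤ t') := by
  have hqa := apply_lt_of_mem_segment hq_bd hab had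
  have hqc := apply_lt_of_mem_segment hq_bd hcb hcd
  obtain ⟨α, β, hα, hβ, hαβ, hq⟩ := hq_ac
  obtain ⟨γ, δ, hγ, hδ, hγδ, hq'⟩ := hq_bd
  have ha₁ := congrArg fa hq
  have ha₂ := congrArg fa hq'
  have hc₁ := congrArg fc hq
  have hc₂ := congrArg fc hq'
  subst hfb hfd
  simp only [map_add, map_smul, smul_eq_mul, LinearMap.add_apply, LinearMap.smul_apply]
    at ha₁ ha₂ hc₁ hc₂ hba hbc hda hdc
  refine nonneg_or_nonneg_of_quad (A₁ := fa a - fa q) (A₂ := fc a - fc q)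
    (B₁ := fa b - fa q) (B₂ := fc b - fc q) (C₁ := fa c - fa q) (C₂ := fc c - fc q)
    (D₁ := fa d - fa q) (D₂ := fc d - fc q) hα hβ hαβ ?_ ?_ hγ hδ hγδ ?_ ?_ ?_ ?_ ?_ ?_ ?_ ?_
    ?_ ?_ ?_ ?_
  all_goals first
    | linarith
    | linear_combination ha₁ - fa q * hαβ
    | linear_combination hc₁ - fc q * hαβ
    | linear_combination ha₂ - fa q * hγδ
    | linear_combination hc₂ - fc q * hγδ

theorem exists_smul_add_smul_eq_smul (hE : finrank ℝ E = 2)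
    (hq_ac : q ∈ segment ℝ a c) (hq_bd : q ∈ segment ℝ b d)
    (hab : fa b < fa a) (had : fa d < fa a) (hcb : fc b < fc c) (hcd : fc d < fc c)
    (hba : fb a < fb b) (hbc : fb c < fb b) (hda : fd a < fd d) (hdc : fd c < fd d) :
    ∃ s t r : ℝ, 0 ≤ s ∧ 0 ≤ t ∧ 0 < s + t ∧ 0 ≤ r ∧
      (s • fa + t • fc = r • fb ∨ s • fa + t • fc = r • fd) := by
  by_cases hind : LinearIndependent ℝ ![fa, fc]
  · have hspan : ∀ f : Dual ℝ E, ∃ s t : ℝ, s • fa + t • fc = f := by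
      intro f
      have htop := hind.span_eq_top_of_card_eq_finrank (by simp [hE])
      rw [Matrix.range_cons, Matrix.range_cons, Matrix.range_empty, Set.union_empty,
        Set.singleton_union] at htop
      exact Submodule.mem_span_pair.1 (htop ▸ Submodule.mem_top)
    obtain ⟨s, t, hfb⟩ := hspan fb
    obtain ⟨s', t', hfd⟩ := hspan fd
    have pos_of_lt : ∀ {s t : ℝ} {f : Dual ℝ E} {x y : E}, 0 ≤ s → 0 ≤ t →
        s • fa + t • fc = f → f x < f y → 0 < s + t := by
      intro s t f x y hs ht hf hxy
      by_contra! h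
      obtain rfl : s = 0 := by linarith
      obtain rfl : t = 0 := by linarith
      simp [← hf] at hxy
    rcases nonneg_or_nonneg_of_mem_segment hq_ac hq_bd hfb.symm hfd.symm hab had hcb hcd
      hba hbc hda hdc with ⟨hs, ht⟩ | ⟨hs, ht⟩
    · exact ⟨s, t, 1, hs, ht, pos_of_lt hs ht hfb hba, zero_le_one, .inl (by rw [one_smul, hfb])⟩
    · exact ⟨s', t', 1, hs, ht, pos_of_lt hs ht hfd hda, zero_le_one, .inr (by rw [one_smul, hfd])⟩
  -- Dependent `f_a, f_c` take opposite signs at `a - c`, so they are negatively proportional.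
  · rw [LinearIndependent.pair_iff] at hind
    push Not at hind
    obtain ⟨α, β, hαβ, hne⟩ := hind
    have hqa := apply_lt_of_mem_segment hq_bd hab had
    have hqc := apply_lt_of_mem_segment hq_bd hcb hcd
    have hca : fa c < fa a := lt_of_not_ge fun h =>
      ((convex_halfSpace_ge fa.isLinear (fa a)).segment_subset (le_refl (fa a)) h hq_ac).not_gt hqa
    have hac : fc a < fc c := lt_of_not_ge fun h =>
      ((convex_halfSpace_ge fc.isLinear (fc c)).segment_subset h (le_refl (fc c)) hq_ac).not_gt hqc
    have hval : α * (fa a - fa c) + β * (fc a - fc c) = 0 := by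
      simpa [mul_sub] using LinearMap.congr_fun hαβ (a - c)
    rcases le_or_gt 0 α with hα | hα
    · have hβ : 0 ≤ β := by nlinarith
      refine ⟨α, β, 0, hα, hβ, ?_, le_rfl, .inl (by rw [hαβ, zero_smul])⟩
      by_contra! h
      exact hne (by linarith) (by linarith)
    · refine ⟨-α, -β, 0, by linarith, by nlinarith, by nlinarith, le_rfl, .inl ?_⟩
      linear_combination (norm := module) -hαβ

end Module.Dual

namespace Seminorm

variable {E : Type*} [AddCommGroup E] [Module ℝ E]

theorem disjoint_segment_segment (hE : finrank ℝ E = 2) {p : Seminorm ℝ E}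
    {a b c d r₁ r₂ : E} {l₁ l₂ : ℝ}
    (hac : ({a, c} : Set E) ⊆ p.closedBall r₁ l₁ \ p.closedBall r₂ l₂)
    (hbd : ({b, d} : Set E) ⊆ p.closedBall r₂ l₂ \ p.closedBall r₁ l₁) :
    Disjoint (segment ℝ a c) (segment ℝ b d) := by
  wlog hl : l₁ ≤ l₂ generalizing a b c d r₁ r₂ l₁ l₂
  · exact (this hbd hac (le_of_not_ge hl)).symm
  simp only [Set.insert_subset_iff, Set.singleton_subset_iff, Set.mem_sdiff] at hac hbd
  obtain ⟨⟨ha₁, ha₂⟩, hc₁, hc₂⟩ := hac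
  obtain ⟨⟨hb₂, hb₁⟩, hd₂, hd₁⟩ := hbd
  obtain ⟨fa, hfa, hfaa⟩ := p.exists_dual_vector (a - r₂)
  obtain ⟨fc, hfc, hfcc⟩ := p.exists_dual_vector (c - r₂)
  obtain ⟨fb, hfb, hfbb⟩ := p.exists_dual_vector (b - r₁)
  obtain ⟨fd, hfd, hfdd⟩ := p.exists_dual_vector (d - r₁)
  rw [Set.disjoint_left]
  intro q hq_ac hq_bd
  obtain ⟨s, t, r, hs, ht, hst, hr, h⟩ := Dual.exists_smul_add_smul_eq_smul hE hq_ac hq_bd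
    (apply_lt_of_notMem_closedBall hfa hfaa ha₂ hb₂)
    (apply_lt_of_notMem_closedBall hfa hfaa ha₂ hd₂)
    (apply_lt_of_notMem_closedBall hfc hfcc hc₂ hb₂)
    (apply_lt_of_notMem_closedBall hfc hfcc hc₂ hd₂)
    (apply_lt_of_notMem_closedBall hfb hfbb hb₁ ha₁)
    (apply_lt_of_notMem_closedBall hfb hfbb hb₁ hc₁)
    (apply_lt_of_notMem_closedBall hfd hfdd hd₁ ha₁)
    (apply_lt_of_notMem_closedBall hfd hfdd hd₁ hc₁)
  have hfa₁ := sub_lt_apply_sub hfa hfaa ha₁ ha₂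
  have hfc₁ := sub_lt_apply_sub hfc hfcc hc₁ hc₂
  have hl₁ : 0 ≤ l₁ := (apply_nonneg p _).trans ha₁
  have key : ∀ (g : Dual ℝ E) (x : E), (∀ y, g y ≤ p y) → g (x - r₁) = p (x - r₁) →
      x ∈ p.closedBall r₂ l₂ → x ∉ p.closedBall r₁ l₁ → s • fa + t • fc ≠ r • g := by
    intro g x hg hgx hx₂ hx₁ hcomb
    have hg₁ := sub_lt_apply_sub hg hgx hx₂ hx₁
    rw [← neg_sub r₁ r₂, map_neg] at hg₁
    have hr_le := le_add_of_smul_add_smul_eq hfa hfc hgx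
      (hl₁.trans_lt (not_le.1 hx₁)) hs ht hcomb
    have hv : s * fa (r₁ - r₂) + t * fc (r₁ - r₂) = r * g (r₁ - r₂) := by
      simpa using LinearMap.congr_fun hcomb (r₁ - r₂)
    -- `(s + t) (l₂ - l₁) < r g (r₁ - r₂) ≤ r (l₂ - l₁) ≤ (s + t) (l₂ - l₁)`
    have hlt : (s + t) * (l₂ - l₁) < s * fa (r₁ - r₂) + t * fc (r₁ - r₂) := by
      rcases hs.lt_or_eq with hs' | rfl
      · nlinarith [mul_lt_mul_of_pos_left hfa₁ hs', mul_le_mul_of_nonneg_left hfc₁.le ht]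
      · nlinarith [mul_lt_mul_of_pos_left hfc₁ (by linarith : 0 < t)]
    nlinarith [mul_le_mul_of_nonneg_left hr_le (sub_nonneg.2 hl),
      mul_le_mul_of_nonneg_left hg₁.le hr]
  rcases h with h | h
  · exact key fb b hfb hfbb hb₂ hb₁ h
  · exact key fd d hfd hfdd hd₂ hd₁ h

theorem card_le_three_of_shatters (hE : finrank ℝ E = 2) (p : Seminorm ℝ E) {S : Finset E}
    (hS : Shatters {B | ∃ r l, B = p.closedBall r l} S) : S.card ≤ 3 := by
  classical
  have : FiniteDimensional ℝ E := Module.finite_of_finrank_eq_succ hE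
  by_contra! hS4
  obtain ⟨T, hTS, hT⟩ := Finset.exists_subset_card_eq (show 4 ≤ S.card by omega)
  obtain ⟨U, hUT, hUV⟩ := T.exists_subset_convexHull_inter_nonempty (by omega)
  wlog hU : U.card ≤ 2 generalizing U
  · refine this (T \ U) Finset.sdiff_subset ?_ ?_
    · rwa [Finset.sdiff_sdiff_eq_self hUT, Set.inter_comm]
    · rw [Finset.card_sdiff_of_subset hUT]; omega
  obtain ⟨_, ⟨r₁, l₁, rfl⟩, _, ⟨r₂, l₂, rfl⟩, hU₁, hV₂⟩ := (hS.subset_s12 hTS).exists_subset_sdiff_s12 hUT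
  obtain ⟨q, hqU, hqV⟩ := hUV
  interval_cases hc : U.card
  · simp [Finset.card_eq_zero.1 hc] at hqU
  · obtain ⟨x, rfl⟩ := Finset.card_eq_one.1 hc
    rw [Finset.coe_singleton, convexHull_singleton] at hqU
    have hq₂ := convexHull_min (hV₂.trans Set.sdiff_subset) (convex_closedBall p r₂ l₂) hqV
    exact (hU₁ (by simpa using hqU)).2 hq₂
  · obtain ⟨a, c, -, rfl⟩ := Finset.card_eq_two.1 hc
    obtain ⟨b, d, -, hbd⟩ := Finset.card_eq_two.1 (show (T \ {a, c}).card = 2 by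
      rw [Finset.card_sdiff_of_subset hUT]; omega)
    rw [hbd] at hqV hV₂
    simp only [Finset.coe_insert, Finset.coe_singleton, convexHull_pair] at hqU hqV hU₁ hV₂
    exact Set.disjoint_left.1 (disjoint_segment_segment hE hU₁ hV₂) hqU hqV

end Seminorm

theorem vc_dim_norm_balls_le_three_general (N : ℝ × ℝ → ℝ)
    (N_add : ∀ x y, N (x + y) ≤ N x + N y)
    (N_smul : ∀ (c : ℝ) (x), N (c • x) = |c| * N x)
    (S : Finset (ℝ × ℝ))
    (hS : Shatters {B | ∃ l : ℝ, 0 < l ∧ ∃ r : ℝ × ℝ, B = {x | N (x - r) ≤ l}} S) :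
    S.card ≤ 3 := by
  let p : Seminorm ℝ (ℝ × ℝ) := .of N N_add fun c x => by rw [N_smul, Real.norm_eq_abs]
  refine p.card_le_three_of_shatters (by simp) (hS.mono ?_)
  rintro _ ⟨l, -, r, rfl⟩
  exact ⟨r, l, rfl⟩

/-- For any norm `N` on `ℝ²` (subadditive, absolutely homogeneous, vanishing only at `0`),
the collection of closed balls `{x : N (x − r) ≤ λ}` with `λ > 0` has VC dimension at
most 3: every finite set it shatters has at most 3 points. -/
theorem vc_dim_norm_balls_le_three (N : ℝ × ℝ → ℝ)
    (N_add : ∀ x y, N (x + y) ≤ N x + N y)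
    (N_smul : ∀ (c : ℝ) (x), N (c • x) = |c| * N x)
    (N_eq_zero : ∀ x, N x = 0 ↔ x = 0)
    (S : Finset (ℝ × ℝ))
    (hS : Shatters {B | ∃ l : ℝ, 0 < l ∧ ∃ r : ℝ × ℝ, B = {x | N (x - r) ≤ l}} S) :
    S.card ≤ 3 :=
  vc_dim_norm_balls_le_three_general N N_add N_smul S hS
end

section
/- Let D ⊆ ℝ^d be a convex set contained in the closed half-space {v : v·w ≥ 0} for a unit vector w, let P ⊆ D ∩ {v : v·w = 0} be a convex set symmetric about the origin such that D ⊆ Cone(P, w) (so every x ∈ D can be written as t p + (1−t)w with p ∈ P, t ∈ [0,1]). Then F = D ∪ (−D) is convex. -/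
open RealInnerProductSpace

private lemma comb2 {E : Type*} [AddCommGroup E] [Module ℝ E] {P : Set E}
    (hP : Convex ℝ P) (hP0 : (0 : E) ∈ P) {p q : E} (hp : p ∈ P) (hq : q ∈ P)
    {a b : ℝ} (ha : 0 ≤ a) (hb : 0 ≤ b) (hab : a + b ≤ 1) : a • p + b • q ∈ P := by
  by_cases h : a + b = 0
  · have ha0 : a = 0 := by linarith
    have hb0 : b = 0 := by linarith
    simpa [ha0, hb0] using hP0
  · have hσ : 0 < a + b := lt_of_le_of_ne (by linarith) (Ne.symm h)
    have hm : (a / (a + b)) • p + (b / (a + b)) • q ∈ P :=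
      hP hp hq (div_nonneg ha hσ.le) (div_nonneg hb hσ.le) (by field_simp)
    have := hP hm hP0 hσ.le (by linarith : (0:ℝ) ≤ 1 - (a + b)) (by ring)
    have heq : (a + b) • ((a / (a + b)) • p + (b / (a + b)) • q) + (1 - (a + b)) • (0 : E)
        = a • p + b • q := by
      match_scalars <;> field_simp
    rwa [heq] at this

set_option maxHeartbeats 800000 in
private lemma key (d : ℕ) (D P : Set (EuclideanSpace ℝ (Fin d)))
    (w : EuclideanSpace ℝ (Fin d)) (hw : ‖w‖ = 1)
    (hD : Convex ℝ D)
    (hP : Convex ℝ P)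
    (hPD : P ⊆ D ∩ {v | ⟪v, w⟫ = (0 : ℝ)})
    (hPsymm : ∀ p ∈ P, -p ∈ P) (hP0 : (0 : EuclideanSpace ℝ (Fin d)) ∈ P)
    (hcone : ∀ x ∈ D, ∃ p ∈ P, ∃ t ∈ Set.Icc (0 : ℝ) 1, x = t • p + (1 - t) • w)
    (x y : EuclideanSpace ℝ (Fin d)) (hx : x ∈ D) (hy : -y ∈ D)
    (a b : ℝ) (ha : 0 ≤ a) (hb : 0 ≤ b) (hab : a + b = 1)
    (hc : 0 ≤ ⟪a • x + b • y, w⟫) : a • x + b • y ∈ D := by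
  obtain ⟨p, hp, t, ht, hxe⟩ := hcone x hx
  obtain ⟨q, hq, s, hs, hye⟩ := hcone (-y) hy
  have hye' : y = -(s • q + (1 - s) • w) := by rw [← hye]; simp
  have hww : ⟪w, w⟫ = (1:ℝ) := by
    rw [real_inner_self_eq_norm_sq, hw]; norm_num
  have hpw : ⟪p, w⟫ = (0:ℝ) := (hPD hp).2
  have hqw : ⟪q, w⟫ = (0:ℝ) := (hPD hq).2
  have hxw : ⟪x, w⟫ = 1 - t := by
    rw [hxe, inner_add_left, real_inner_smul_left, real_inner_smul_left, hpw, hww]; ring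
  have hyw : ⟪y, w⟫ = -(1 - s) := by
    rw [hye', inner_neg_left, inner_add_left, real_inner_smul_left, real_inner_smul_left,
      hqw, hww]; ring
  have hc' : 0 ≤ a * (1 - t) - b * (1 - s) := by
    rw [inner_add_left, real_inner_smul_left, real_inner_smul_left, hxw, hyw] at hc
    linarith
  by_cases hb0 : b = 0
  · have ha1 : a = 1 := by linarith
    simpa [hb0, ha1] using hx
  have hbpos : 0 < b := lt_of_le_of_ne hb (Ne.symm hb0)
  obtain ⟨ht0, ht1⟩ := ht
  obtain ⟨hs0, hs1⟩ := hs
  by_cases hαβ : (1 - t) + (1 - s) = 0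
  · -- degenerate: t = s = 1
    have ht' : t = 1 := by linarith
    have hs' : s = 1 := by linarith
    have hxp : x = p := by rw [hxe, ht']; simp
    have hyq : y = -q := by rw [hye', hs']; simp
    have : a • p + b • (-q) ∈ P := hP hp (hPsymm q hq) ha hb hab
    rw [hxp, hyq]
    exact (hPD this).1
  have hαβpos : 0 < (1 - t) + (1 - s) := by
    rcases lt_or_eq_of_le (by linarith : (0:ℝ) ≤ (1 - t) + (1 - s)) with h | h
    · exact h
    · exact absurd h.symm hαβ
  obtain ⟨u, hu⟩ : ∃ u : ℝ, u = (1 - t) / ((1 - t) + (1 - s)) := ⟨_, rfl⟩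
  have hu1 : u ≤ 1 := by
    rw [hu, div_le_one hαβpos]; linarith
  have hbu : b ≤ u := by
    rw [hu, le_div_iff₀ hαβpos]; nlinarith
  have hupos : 0 < u := lt_of_lt_of_le hbpos hbu
  have hrP : (1 - u) • x + u • y ∈ P := by
    have hw0 : (1 - u) * (1 - t) - u * (1 - s) = 0 := by
      rw [hu]; field_simp; ring
    have hr : (1 - u) • x + u • y = ((1 - u) * t) • p + (u * s) • (-q) := by
      rw [hxe, hye']
      match_scalars
      · ring
      · linear_combination hw0
      · ring
    rw [hr]
    exact comb2 hP hP0 hp (hPsymm q hq)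
      (by nlinarith) (by nlinarith) (by nlinarith)
  have hrD : (1 - u) • x + u • y ∈ D := (hPD hrP).1
  have hz : a • x + b • y = (1 - b / u) • x + (b / u) • ((1 - u) • x + u • y) := by
    match_scalars
    · field_simp
      linear_combination u * hab
    · field_simp
  rw [hz]
  exact hD hx hrD (by rw [sub_nonneg, div_le_one hupos]; exact hbu)
    (div_nonneg hb hupos.le) (by ring)

/-- Let `D ⊆ ℝ^d` be convex, contained in the half-space `{v : ⟪v, w⟫ ≥ 0}` for a unit
vector `w`; let `P ⊆ D ∩ {v : ⟪v, w⟫ = 0}` be convex, symmetric about the origin and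
containing it, with every `x ∈ D` of the form `t•p + (1−t)•w`, `p ∈ P`, `t ∈ [0,1]`.
Then `F = D ∪ (−D)` is convex. -/
theorem union_neg_convex (d : ℕ) (D P : Set (EuclideanSpace ℝ (Fin d)))
    (w : EuclideanSpace ℝ (Fin d)) (hw : ‖w‖ = 1)
    (hD : Convex ℝ D) (hDhalf : ∀ v ∈ D, (0 : ℝ) ≤ ⟪v, w⟫)
    (hP : Convex ℝ P)
    (hPD : P ⊆ D ∩ {v | ⟪v, w⟫ = (0 : ℝ)})
    (hPsymm : ∀ p ∈ P, -p ∈ P) (hP0 : (0 : EuclideanSpace ℝ (Fin d)) ∈ P)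
    (hcone : ∀ x ∈ D, ∃ p ∈ P, ∃ t ∈ Set.Icc (0 : ℝ) 1, x = t • p + (1 - t) • w) :
    Convex ℝ (D ∪ (-D)) := by
  intro x hx y hy a b ha hb hab
  have hnD : Convex ℝ (-D) := hD.neg
  rcases hx with hx | hx <;> rcases hy with hy | hy
  · exact Or.inl (hD hx hy ha hb hab)
  · -- x ∈ D, y ∈ -D
    have hy' : -y ∈ D := by simpa using hy
    rcases le_or_gt 0 (⟪a • x + b • y, w⟫ : ℝ) with hc | hc
    · exact Or.inl (key d D P w hw hD hP hPD hPsymm hP0 hcone x y hx hy' a b ha hb hab hc)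
    · refine Or.inr ?_
      have : b • (-y) + a • (-x) ∈ D := by
        refine key d D P w hw hD hP hPD hPsymm hP0 hcone (-y) (-x) hy' (by simpa using hx)
          b a hb ha (by linarith) ?_
        have : (⟪b • (-y) + a • (-x), w⟫ : ℝ) = -⟪a • x + b • y, w⟫ := by
          rw [inner_add_left, inner_add_left, real_inner_smul_left, real_inner_smul_left,
            real_inner_smul_left, real_inner_smul_left, inner_neg_left, inner_neg_left]
          ring
        rw [this]
        linarith
      have heq : -(a • x + b • y) = b • (-y) + a • (-x) := by module
      simp only [Set.mem_neg]
      rwa [← heq] at this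
      
  · -- x ∈ -D, y ∈ D : symmetric
    have hx' : -x ∈ D := by simpa using hx
    rcases le_or_gt 0 (⟪a • x + b • y, w⟫ : ℝ) with hc | hc
    · refine Or.inl ?_
      have := key d D P w hw hD hP hPD hPsymm hP0 hcone y x hy hx' b a hb ha (by linarith)
        (by rwa [show (⟪b • y + a • x, w⟫ : ℝ) = ⟪a • x + b • y, w⟫ by
          rw [inner_add_left, inner_add_left]; ring])
      rwa [show a • x + b • y = b • y + a • x by module]
    · refine Or.inr ?_
      have : a • (-x) + b • (-y) ∈ D := by
        refine key d D P w hw hD hP hPD hPsymm hP0 hcone (-x) (-y) hx' (by simpa using hy)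
          a b ha hb hab ?_
        have : (⟪a • (-x) + b • (-y), w⟫ : ℝ) = -⟪a • x + b • y, w⟫ := by
          rw [inner_add_left, inner_add_left, real_inner_smul_left, real_inner_smul_left,
            real_inner_smul_left, real_inner_smul_left, inner_neg_left, inner_neg_left]
          ring
        rw [this]
        linarith
      simp only [Set.mem_neg]
      rwa [show -(a • x + b • y) = a • (-x) + b • (-y) by module]
  · exact Or.inr (hnD hx hy ha hb hab)
end

section
/- For every d ≥ 3 there exists a norm on ℝ^d whose collection of closed balls has infinite VC dimension; equivalently, there is a symmetric convex body F ⊆ ℝ^d such that the family {λF + r : λ > 0, r ∈ ℝ^d} has infinite VC dimension. -/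
/-!
Take orthonormal `e₀, e₁, z` and distinct unit vectors `P j` on the circle spanned by `e₀, e₁`,
and enumerate the finite sets of indices as `A k`. On level `k`, at radius `x = 2⁻ᵏ⁻¹` and height
`1 - x²`, place the points `x • P j + (1 - x²) • z` for `j ∈ A k`; `F` is the closed absolutely
convex hull of all of them together with a small ball. The homothety carrying level `k` back to
the circle sends `P m` into `F` exactly when `m ∈ A k`. For `m ∉ A k` the separating functional is
`⟪2 x • P m + z, ·⟫`: the profile `x ↦ 1 - x²` is concave and this functional is its tangent at
`x`, so every other level stays a definite amount below it, while on level `k` itself the finitely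
many `P j` with `j ≠ m` fall strictly short of `P m`.
-/

open Set Metric Bornology Function RealInnerProductSpace

section

variable {E : Type*} [NormedAddCommGroup E] [NormedSpace ℝ E]

theorem Bornology.IsBounded.closedAbsConvexHull {S : Set E} (hS : IsBounded S) :
    IsBounded (closedAbsConvexHull ℝ S) := by
  obtain ⟨R, hR⟩ := hS.subset_closedBall 0
  exact isBounded_closedBall.subset <| closedAbsConvexHull_min hR
    ⟨balanced_closedBall_zero, convex_closedBall 0 R⟩ isClosed_closedBall

theorem closedAbsConvexHull_subset_preimage_closedBall {S : Set E} (φ : E →L[ℝ] ℝ) {c : ℝ}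
    (h : ∀ x ∈ S, |φ x| ≤ c) : closedAbsConvexHull ℝ S ⊆ φ ⁻¹' closedBall 0 c :=
  closedAbsConvexHull_min (fun x hx => by simpa using h x hx)
    ⟨balanced_closedBall_zero.mulActionHom_preimage φ.toLinearMap.toMulActionHom,
      (convex_closedBall 0 c).linear_preimage φ.toLinearMap⟩
    (isClosed_closedBall.preimage φ.continuous)

theorem mem_image_inv_smul_add_iff {a : ℝ} (ha : a ≠ 0) (w p : E) (F : Set E) :
    p ∈ (fun v => a⁻¹ • v + -(a⁻¹ • w)) '' F ↔ a • p + w ∈ F := by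
  constructor
  · rintro ⟨v, hv, rfl⟩
    simpa [smul_add, smul_smul, mul_inv_cancel₀ ha] using hv
  · exact fun h => ⟨a • p + w, h, by simp [smul_add, smul_smul, inv_mul_cancel₀ ha]⟩

end

theorem exists_card_eq_shatters {Ω : Type*} {C : Set (Set Ω)} {Q : ℕ → Ω} (hQ : Injective Q)
    (hC : ∀ A : Finset ℕ, ∃ c ∈ C, ∀ m, Q m ∈ c ↔ m ∈ A) (n : ℕ) :
    ∃ S : Finset Ω, S.card = n ∧ Shatters C S := by
  classical
  refine ⟨(Finset.range n).image Q,
    by rw [Finset.card_image_of_injective _ hQ, Finset.card_range], fun A' hA' => ?_⟩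
  obtain ⟨c, hc, hQc⟩ := hC ((Finset.range n).filter (Q · ∈ A'))
  refine ⟨c, hc, Set.ext fun x => ⟨?_, fun hx => ?_⟩⟩
  · rintro ⟨hxS, hxc⟩
    obtain ⟨j, -, rfl⟩ := Finset.mem_image.mp hxS
    exact (Finset.mem_filter.mp ((hQc j).mp hxc)).2
  · obtain ⟨j, hj, rfl⟩ := Finset.mem_image.mp (hA' hx)
    exact ⟨Finset.mem_image_of_mem Q hj, (hQc j).mpr (Finset.mem_filter.mpr ⟨hj, hx⟩)⟩

theorem Finset.exists_bound_lt_of_forall_lt {ι : Type*} (s : Finset ι) {f : ι → ℝ} {a b : ℝ}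
    (ha : a < b) (hf : ∀ i ∈ s, f i < b) : ∃ c < b, a ≤ c ∧ ∀ i ∈ s, f i ≤ c := by
  classical
  refine ⟨(insert a (s.image f)).max' (Finset.insert_nonempty _ _), ?_,
    Finset.le_max' _ _ (Finset.mem_insert_self _ _),
    fun i hi => Finset.le_max' _ _ <| Finset.mem_insert_of_mem <| Finset.mem_image_of_mem f hi⟩
  simpa [Finset.max'_lt_iff] using ⟨ha, hf⟩

noncomputable def levelRadius (k : ℕ) : ℝ := (1 / 2) ^ (k + 1)

theorem levelRadius_pos (k : ℕ) : 0 < levelRadius k := by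
  unfold levelRadius; positivity

theorem levelRadius_le_half (k : ℕ) : levelRadius k ≤ 1 / 2 := by
  unfold levelRadius
  simpa using pow_le_pow_of_le_one (by norm_num : (0 : ℝ) ≤ 1 / 2) (by norm_num)
    (Nat.le_add_left 1 k)

theorem two_mul_levelRadius_le {i j : ℕ} (h : i < j) : 2 * levelRadius j ≤ levelRadius i := by
  unfold levelRadius
  calc 2 * (1 / 2 : ℝ) ^ (j + 1) = (1 / 2) ^ j := by rw [pow_succ]; ring
    _ ≤ (1 / 2) ^ (i + 1) := pow_le_pow_of_le_one (by norm_num) (by norm_num) h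

theorem levelRadius_div_two_le_abs_sub {k k' : ℕ} (h : k' ≠ k) :
    levelRadius k / 2 ≤ |levelRadius k - levelRadius k'| := by
  have := levelRadius_pos k'
  rcases h.lt_or_gt with h | h
  · have := two_mul_levelRadius_le h
    rw [abs_sub_comm, abs_of_pos (by linarith)]
    linarith
  · have := two_mul_levelRadius_le h
    rw [abs_of_pos (by linarith)]
    linarith

section Levels

variable {E : Type*} [NormedAddCommGroup E] [InnerProductSpace ℝ E] (P : ℕ → E) (z : E)

noncomputable def levelPoint (k m : ℕ) : E :=
  levelRadius k • P m + (1 - levelRadius k ^ 2) • z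

def levelBody (A : ℕ → Finset ℕ) : Set E :=
  closedAbsConvexHull ℝ ({levelPoint P z k j | (k : ℕ) (j ∈ A k)} ∪ closedBall 0 (1 / 4))

noncomputable def levelNormal (k m : ℕ) : E := (2 * levelRadius k) • P m + z

variable {P z} {A : ℕ → Finset ℕ}

theorem levelPoint_mem_levelBody {k j : ℕ} (hj : j ∈ A k) :
    levelPoint P z k j ∈ levelBody P z A :=
  subset_closedAbsConvexHull (Or.inl ⟨k, j, hj, rfl⟩)

theorem norm_levelPoint_le (hP : ∀ j, ‖P j‖ = 1) (hz : ‖z‖ = 1) (k j : ℕ) :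
    ‖levelPoint P z k j‖ ≤ 2 := by
  have hx := levelRadius_pos k
  have := levelRadius_le_half k
  calc ‖levelPoint P z k j‖ ≤ ‖levelRadius k • P j‖ + ‖(1 - levelRadius k ^ 2) • z‖ :=
        norm_add_le _ _
    _ = levelRadius k + (1 - levelRadius k ^ 2) := by
        rw [norm_smul, norm_smul, hP, hz, Real.norm_of_nonneg hx.le,
          Real.norm_of_nonneg (by nlinarith), mul_one, mul_one]
    _ ≤ 2 := by nlinarith

theorem isBounded_levelBody (hP : ∀ j, ‖P j‖ = 1) (hz : ‖z‖ = 1) :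
    IsBounded (levelBody P z A) := by
  refine IsBounded.closedAbsConvexHull (IsBounded.union ?_ isBounded_closedBall)
  refine isBounded_closedBall (x := 0) (r := 2) |>.subset ?_
  rintro _ ⟨k, j, -, rfl⟩
  simpa using norm_levelPoint_le hP hz k j

theorem interior_levelBody_nonempty : (interior (levelBody P z A)).Nonempty :=
  ⟨0, mem_interior_iff_mem_nhds.2 <| Filter.mem_of_superset
    (closedBall_mem_nhds 0 (by norm_num : (0 : ℝ) < 1 / 4))
    (subset_union_right.trans subset_closedAbsConvexHull)⟩

theorem neg_mem_levelBody {v : E} (hv : v ∈ levelBody P z A) : -v ∈ levelBody P z A :=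
  absConvex_convexClosedHull.1.neg_mem_iff.2 hv

theorem inner_levelNormal_levelPoint (hz : ‖z‖ = 1) (hPz : ∀ j, ⟪P j, z⟫ = 0)
    (k m k' j : ℕ) :
    ⟪levelNormal P z k m, levelPoint P z k' j⟫ =
      2 * levelRadius k * levelRadius k' * ⟪P m, P j⟫ + (1 - levelRadius k' ^ 2) := by
  have hzP : ∀ j, ⟪z, P j⟫ = 0 := fun j => by rw [real_inner_comm, hPz]
  simp only [levelNormal, levelPoint, inner_add_left, inner_add_right, real_inner_smul_left,
    real_inner_smul_right, hPz, hzP, real_inner_self_eq_norm_sq, hz]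
  ring

theorem inner_levelNormal_levelPoint_self (hP : ∀ j, ‖P j‖ = 1) (hz : ‖z‖ = 1)
    (hPz : ∀ j, ⟪P j, z⟫ = 0) (k m : ℕ) :
    ⟪levelNormal P z k m, levelPoint P z k m⟫ = 1 + levelRadius k ^ 2 := by
  rw [inner_levelNormal_levelPoint hz hPz, real_inner_self_eq_norm_sq, hP]
  ring

theorem inner_levelNormal_levelPoint_pos (hP : ∀ j, ‖P j‖ = 1) (hz : ‖z‖ = 1)
    (hPz : ∀ j, ⟪P j, z⟫ = 0) (k m k' j : ℕ) :
    0 < ⟪levelNormal P z k m, levelPoint P z k' j⟫ := by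
  have hx := levelRadius_pos k
  have hx' := levelRadius_pos k'
  have hxx' : levelRadius k * levelRadius k' ≤ 1 / 2 * (1 / 2) :=
    mul_le_mul (levelRadius_le_half k) (levelRadius_le_half k') hx'.le (by norm_num)
  have hp : 0 ≤ levelRadius k * levelRadius k' * (⟪P m, P j⟫ + 1) :=
    mul_nonneg (by positivity) (by linarith [neg_one_le_real_inner_of_norm_eq_one (hP m) (hP j)])
  have hx'sq : levelRadius k' ^ 2 ≤ (1 / 2) ^ 2 :=
    pow_le_pow_left₀ hx'.le (levelRadius_le_half k') 2
  rw [inner_levelNormal_levelPoint hz hPz]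
  linarith

theorem inner_levelNormal_levelPoint_le_of_ne (hP : ∀ j, ‖P j‖ = 1) (hz : ‖z‖ = 1)
    (hPz : ∀ j, ⟪P j, z⟫ = 0) {k k' : ℕ} (hk' : k' ≠ k) (m j : ℕ) :
    ⟪levelNormal P z k m, levelPoint P z k' j⟫ ≤ 1 + 3 / 4 * levelRadius k ^ 2 := by
  have hgap : (levelRadius k / 2) ^ 2 ≤ (levelRadius k - levelRadius k') ^ 2 := by
    rw [← sq_abs (levelRadius k - levelRadius k')]
    exact pow_le_pow_left₀ (by linarith [levelRadius_pos k])
      (levelRadius_div_two_le_abs_sub hk') 2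
  have hp : levelRadius k * levelRadius k' * ⟪P m, P j⟫ ≤ levelRadius k * levelRadius k' :=
    mul_le_of_le_one_right (mul_pos (levelRadius_pos k) (levelRadius_pos k')).le
      (real_inner_le_one_of_norm_eq_one (hP m) (hP j))
  rw [inner_levelNormal_levelPoint hz hPz]
  nlinarith

theorem inner_levelNormal_levelPoint_lt_of_ne (hP : ∀ j, ‖P j‖ = 1) (hz : ‖z‖ = 1)
    (hPz : ∀ j, ⟪P j, z⟫ = 0) {m j : ℕ} (hj : P j ≠ P m) (k : ℕ) :
    ⟪levelNormal P z k m, levelPoint P z k j⟫ < 1 + levelRadius k ^ 2 := by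
  have hp : levelRadius k * levelRadius k * ⟪P m, P j⟫ < levelRadius k * levelRadius k :=
    mul_lt_of_lt_one_right (mul_pos (levelRadius_pos k) (levelRadius_pos k))
      ((inner_lt_one_iff_real_of_norm_eq_one (hP m) (hP j)).2 hj.symm)
  rw [inner_levelNormal_levelPoint hz hPz]
  nlinarith

theorem abs_inner_levelNormal_le_of_mem_closedBall (hP : ∀ j, ‖P j‖ = 1) (hz : ‖z‖ = 1)
    (k m : ℕ) {y : E} (hy : y ∈ closedBall 0 (1 / 4)) :
    |⟪levelNormal P z k m, y⟫| ≤ 1 + 3 / 4 * levelRadius k ^ 2 := by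
  have hx := levelRadius_pos k
  have := levelRadius_le_half k
  have hnormal : ‖levelNormal P z k m‖ ≤ 2 := by
    refine (norm_add_le _ _).trans ?_
    rw [norm_smul, hP, hz, Real.norm_of_nonneg (by positivity)]
    linarith
  calc |⟪levelNormal P z k m, y⟫| ≤ ‖levelNormal P z k m‖ * ‖y‖ := abs_real_inner_le_norm _ _
    _ ≤ 2 * (1 / 4) :=
        mul_le_mul hnormal (mem_closedBall_zero_iff.1 hy) (norm_nonneg _) zero_le_two
    _ ≤ 1 + 3 / 4 * levelRadius k ^ 2 := by nlinarith

theorem levelPoint_notMem_levelBody (hP : ∀ j, ‖P j‖ = 1) (hz : ‖z‖ = 1)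
    (hPz : ∀ j, ⟪P j, z⟫ = 0) (hinj : Injective P) {k m : ℕ} (hm : m ∉ A k) :
    levelPoint P z k m ∉ levelBody P z A := by
  have hx := levelRadius_pos k
  obtain ⟨C, hC, hC₀, hCA⟩ := (A k).exists_bound_lt_of_forall_lt
    (by nlinarith : 1 + 3 / 4 * levelRadius k ^ 2 < 1 + levelRadius k ^ 2)
    fun j hj => inner_levelNormal_levelPoint_lt_of_ne hP hz hPz
      (hinj.ne (ne_of_mem_of_not_mem hj hm)) k
  have hbody : levelBody P z A ⊆ innerSL ℝ (levelNormal P z k m) ⁻¹' closedBall 0 C := by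
    refine closedAbsConvexHull_subset_preimage_closedBall _ ?_
    rintro y (⟨k', j, hj, rfl⟩ | hy)
    · rw [innerSL_apply_apply,
        abs_of_pos (inner_levelNormal_levelPoint_pos hP hz hPz k m k' j)]
      rcases eq_or_ne k' k with rfl | hk'
      · exact hCA j hj
      · exact (inner_levelNormal_levelPoint_le_of_ne hP hz hPz hk' m j).trans hC₀
    · exact (abs_inner_levelNormal_le_of_mem_closedBall hP hz k m hy).trans hC₀
  intro hmem
  have := hbody hmem
  rw [mem_preimage, mem_closedBall_zero_iff, innerSL_apply_apply, Real.norm_eq_abs,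
    inner_levelNormal_levelPoint_self hP hz hPz, abs_of_pos (by positivity)] at this
  linarith

theorem levelPoint_mem_levelBody_iff (hP : ∀ j, ‖P j‖ = 1) (hz : ‖z‖ = 1)
    (hPz : ∀ j, ⟪P j, z⟫ = 0) (hinj : Injective P) {k m : ℕ} :
    levelPoint P z k m ∈ levelBody P z A ↔ m ∈ A k :=
  ⟨not_imp_not.1 (levelPoint_notMem_levelBody hP hz hPz hinj), levelPoint_mem_levelBody⟩

end Levels

section Circle

variable {E : Type*} [NormedAddCommGroup E] [InnerProductSpace ℝ E] {e : Fin 3 → E}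

noncomputable def circlePoint (e : Fin 3 → E) (θ : ℝ) : E := Real.cos θ • e 0 + Real.sin θ • e 1

theorem Orthonormal.inner_circlePoint (he : Orthonormal ℝ e) (θ : ℝ) (i : Fin 3) :
    ⟪circlePoint e θ, e i⟫ = Real.cos θ * (if i = 0 then 1 else 0) +
      Real.sin θ * (if i = 1 then 1 else 0) := by
  simp only [circlePoint, inner_add_left, real_inner_smul_left, orthonormal_iff_ite.1 he,
    eq_comm]

theorem Orthonormal.norm_circlePoint (he : Orthonormal ℝ e) (θ : ℝ) : ‖circlePoint e θ‖ = 1 := by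
  have h := norm_add_sq_real (Real.cos θ • e 0) (Real.sin θ • e 1)
  simp only [norm_smul, he.1, real_inner_smul_left, real_inner_smul_right,
    he.2 (by decide : (0 : Fin 3) ≠ 1), Real.norm_eq_abs, mul_one, mul_zero, add_zero, sq_abs,
    Real.cos_sq_add_sin_sq] at h
  rwa [circlePoint, ← pow_eq_one_iff_of_nonneg (norm_nonneg _) two_ne_zero]

theorem Orthonormal.injOn_circlePoint (he : Orthonormal ℝ e) :
    InjOn (circlePoint e) (Icc 0 Real.pi) := fun a ha b hb h => by
  have := congrArg (⟪·, e 0⟫) h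
  simp only [he.inner_circlePoint] at this
  exact Real.injOn_cos ha hb (by simpa using this)

end Circle

/-- For every `d ≥ 3` there is a symmetric convex body `F ⊆ ℝ^d` (closed, bounded, convex,
with nonempty interior, symmetric about the origin) — equivalently the unit ball of a norm
on `ℝ^d` — whose family of positive scalings and translates has infinite VC dimension:
it shatters finite sets of every cardinality. -/
theorem exists_norm_with_infinite_vc_dim (d : ℕ) (hd : 3 ≤ d) :
    ∃ F : Set (EuclideanSpace ℝ (Fin d)),
      IsClosed F ∧ Bornology.IsBounded F ∧ Convex ℝ F ∧ (interior F).Nonempty ∧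
      (∀ v ∈ F, -v ∈ F) ∧
      ∀ n : ℕ, ∃ S : Finset (EuclideanSpace ℝ (Fin d)), S.card = n ∧
        Shatters {B | ∃ l : ℝ, 0 < l ∧ ∃ r : EuclideanSpace ℝ (Fin d),
          B = (fun v => l • v + r) '' F} S := by
  set e : Fin 3 → EuclideanSpace ℝ (Fin d) :=
    fun i => EuclideanSpace.single (Fin.castLE hd i) 1
  have he : Orthonormal ℝ e := EuclideanSpace.orthonormal_single.comp _ (Fin.castLE_injective hd)
  set P : ℕ → EuclideanSpace ℝ (Fin d) := fun j => circlePoint e ((j : ℝ) + 1)⁻¹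
  have hP : ∀ j, ‖P j‖ = 1 := fun j => he.norm_circlePoint _
  have hPz : ∀ j, ⟪P j, e 2⟫ = 0 := fun j => by simp [P, he.inner_circlePoint]
  have hz : ‖e 2‖ = 1 := he.1 2
  have hθ : ∀ j : ℕ, ((j : ℝ) + 1)⁻¹ ∈ Icc 0 Real.pi := fun j =>
    ⟨by positivity, (inv_le_one_of_one_le₀ (by simp)).trans (by linarith [Real.pi_gt_three])⟩
  have hinj : Injective P := fun i j h => by
    simpa using he.injOn_circlePoint (hθ i) (hθ j) h
  refine ⟨levelBody P (e 2) (Denumerable.ofNat (Finset ℕ)), isClosed_closedAbsConvexHull,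
    isBounded_levelBody hP hz, absConvex_convexClosedHull.2, interior_levelBody_nonempty,
    fun v => neg_mem_levelBody, exists_card_eq_shatters hinj fun B => ?_⟩
  obtain ⟨k, rfl⟩ : ∃ k, Denumerable.ofNat (Finset ℕ) k = B := ⟨_, Denumerable.ofNat_encode B⟩
  refine ⟨_, ⟨(levelRadius k)⁻¹, inv_pos.2 (levelRadius_pos k),
    -((levelRadius k)⁻¹ • ((1 - levelRadius k ^ 2) • e 2)), rfl⟩, fun m => ?_⟩
  rw [mem_image_inv_smul_add_iff (levelRadius_pos k).ne']
  exact levelPoint_mem_levelBody_iff hP hz hPz hinj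
end
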